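/- arXiv:2401.03951 — 12 statements merged into one kernel-verified Lean document; each statement's English description precedes it below -/
import Mathlib

section
/- Consider the Bilevel Selection Problem with disjoint item sets E_l and E_f, total capacity b ∈ {0,…,|E_l|+|E_f|}, leader costs c : E_l ∪ E_f → ℚ, and follower costs d : E_f → ℚ. Define b_l⁻ = max(0, b − |E_f|) and b_l⁺ = min(b, |E_l|). Then there exists an optimal leader's solution X ⊆ E_l such that |X| = b_l for some b_l ∈ {b_l⁻,…,b_l⁺}, X consists of the b_l cheapest items of E_l with respect to c, and the follower's corresponding solution Y consists of the b − b_l cheapest items of E_f with respect to d. -/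
/-- For any `n ≤ s.card` there is an `n`-element subset `t` of `s` that consists of
the `n` cheapest items w.r.t. `c` and minimizes the total cost among all
`n`-element subsets. -/
lemma exists_greedy_min {α : Type*} [DecidableEq α] (s : Finset α) (c : α → ℚ)
    (n : ℕ) (hn : n ≤ s.card) :
    ∃ t : Finset α, t ⊆ s ∧ t.card = n ∧
      (∀ e₁ ∈ t, ∀ e₂ ∈ s \ t, c e₁ ≤ c e₂) ∧
      (∀ t' : Finset α, t' ⊆ s → t'.card = n → ∑ e ∈ t, c e ≤ ∑ e ∈ t', c e) := by
  obtain ⟨t, ht, hmin⟩ := Finset.exists_min_image (s.powersetCard n)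
    (fun t => ∑ e ∈ t, c e) ((Finset.powersetCard_nonempty).2 hn)
  rw [Finset.mem_powersetCard] at ht
  refine ⟨t, ht.1, ht.2, ?_, ?_⟩
  · intro e₁ h₁ e₂ h₂
    rw [Finset.mem_sdiff] at h₂
    by_contra hlt
    push_neg at hlt
    have h₂t : e₂ ∉ t.erase e₁ := fun h => h₂.2 (Finset.mem_of_mem_erase h)
    set t' : Finset α := insert e₂ (t.erase e₁) with ht'
    have ht'sub : t' ⊆ s := by
      intro x hx
      rcases Finset.mem_insert.1 hx with rfl | hx
      · exact h₂.1
      · exact ht.1 (Finset.mem_of_mem_erase hx)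
    have ht'card : t'.card = n := by
      have hn1 : 1 ≤ n := ht.2 ▸ Finset.card_pos.2 ⟨e₁, h₁⟩
      rw [ht', Finset.card_insert_of_notMem h₂t, Finset.card_erase_of_mem h₁, ht.2]
      omega
    have hsum : ∑ e ∈ t', c e < ∑ e ∈ t, c e := by
      rw [ht', Finset.sum_insert h₂t]
      have := Finset.sum_erase_add t c h₁
      linarith [this]
    have := hmin t' (Finset.mem_powersetCard.2 ⟨ht'sub, ht'card⟩)
    linarith
  · intro t' hsub hcard
    exact hmin t' (Finset.mem_powersetCard.2 ⟨hsub, hcard⟩)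

/-- Bilevel Selection Problem with disjoint item sets: there is an optimal
leader's solution `X` together with the follower's response `Y` such that
`|X| = b_l` lies between `max(0, b − |E_f|)` and `min(b, |E_l|)`, `X` consists of
the `b_l` cheapest items of `E_l` w.r.t. `c`, and `Y` consists of the `b − b_l`
cheapest items of `E_f` w.r.t. `d`; the pair is optimal among all feasible
leader's solutions with follower-optimal responses. -/
theorem bilevel_selection_disjoint_greedy_optimal {α : Type*} [DecidableEq α]
    (El Ef : Finset α) (hdisj : Disjoint El Ef)
    (b : ℕ) (hb : b ≤ El.card + Ef.card)
    (c : α → ℚ) (d : α → ℚ) :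
    ∃ X Y : Finset α,
      X ⊆ El ∧ Y ⊆ Ef ∧ X.card + Y.card = b ∧
      b - Ef.card ≤ X.card ∧ X.card ≤ min b El.card ∧
      (∀ e₁ ∈ X, ∀ e₂ ∈ El \ X, c e₁ ≤ c e₂) ∧
      (∀ e₁ ∈ Y, ∀ e₂ ∈ Ef \ Y, d e₁ ≤ d e₂) ∧
      (∀ X' Y' : Finset α, X' ⊆ El → Y' ⊆ Ef → X'.card + Y'.card = b →
        (∀ e₁ ∈ Y', ∀ e₂ ∈ Ef \ Y', d e₁ ≤ d e₂) →
        ∑ e ∈ X ∪ Y, c e ≤ ∑ e ∈ X' ∪ Y', c e) := by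
  classical
  -- the finite set of feasible pairs
  set P : Finset (Finset α × Finset α) :=
    (El.powerset ×ˢ Ef.powerset).filter
      (fun p => p.1.card + p.2.card = b ∧
        ∀ e₁ ∈ p.2, ∀ e₂ ∈ Ef \ p.2, d e₁ ≤ d e₂) with hP
  have memP : ∀ p : Finset α × Finset α, p ∈ P ↔
      p.1 ⊆ El ∧ p.2 ⊆ Ef ∧ p.1.card + p.2.card = b ∧
        ∀ e₁ ∈ p.2, ∀ e₂ ∈ Ef \ p.2, d e₁ ≤ d e₂ := by
    intro p
    simp only [hP, Finset.mem_filter, Finset.mem_product, Finset.mem_powerset]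
    tauto
  -- P is nonempty
  have hne : P.Nonempty := by
    obtain ⟨X₁, hX₁sub, hX₁card, _, _⟩ := exists_greedy_min El c (min b El.card)
      (min_le_right _ _)
    have hm : b - min b El.card ≤ Ef.card := by omega
    obtain ⟨Y₁, hY₁sub, hY₁card, hY₁greedy, _⟩ :=
      exists_greedy_min Ef d (b - min b El.card) hm
    have hcards : X₁.card + Y₁.card = b := by omega
    exact ⟨(X₁, Y₁), (memP _).2 ⟨hX₁sub, hY₁sub, hcards, hY₁greedy⟩⟩
  obtain ⟨p, hp, hpmin⟩ := Finset.exists_min_image P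
    (fun p => ∑ e ∈ p.1 ∪ p.2, c e) hne
  obtain ⟨hpX, hpY, hpcard, hpYgreedy⟩ := (memP p).1 hp
  have hXcardle : p.1.card ≤ El.card := Finset.card_le_card hpX
  have hYcardle : p.2.card ≤ Ef.card := Finset.card_le_card hpY
  -- replace the leader part by the greedy set of the same size
  obtain ⟨X, hXsub, hXcard, hXgreedy, hXmin⟩ := exists_greedy_min El c p.1.card hXcardle
  have hdXY : Disjoint X p.2 := hdisj.mono hXsub hpY
  have hdXY' : ∀ X' Y' : Finset α, X' ⊆ El → Y' ⊆ Ef → Disjoint X' Y' :=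
    fun X' Y' h1 h2 => hdisj.mono h1 h2
  have hcost : ∑ e ∈ X ∪ p.2, c e ≤ ∑ e ∈ p.1 ∪ p.2, c e := by
    rw [Finset.sum_union hdXY, Finset.sum_union (hdXY' p.1 p.2 hpX hpY)]
    have := hXmin p.1 hpX rfl
    linarith
  refine ⟨X, p.2, hXsub, hpY, by omega, by omega, by omega, hXgreedy, hpYgreedy, ?_⟩
  intro X' Y' hX' hY' hcard' hgreedy'
  have hmem : (X', Y') ∈ P := (memP _).2 ⟨hX', hY', hcard', hgreedy'⟩
  have := hpmin (X', Y') hmem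
  simp only at this
  linarith
end

section
/- In the Bilevel Selection Problem with E_l ⊆ E_f, where the follower, given a feasible leader's solution X with |X| ≤ b, selects greedily according to a fixed total order on E_f (selecting the first b − |X| items of E_f \ X in that order), there always exists an optimal leader's solution X that is a prefix of the leader's greedy order: X = {p_l(1),…,p_l(b_l)} for some b_l ∈ {0,…,min(b, |E_l|)}, where p_l sorts E_l by nondecreasing c-values. -/
section BSPAux

variable {α : Type*} [DecidableEq α]

/-- Uniqueness of the follower's greedy response. -/
lemma bsp_resp_unique {Q Y1 Y2 : Finset α} {r : α → ℕ}
    (h1 : Y1 ⊆ Q) (h2 : Y2 ⊆ Q) (hc : Y1.card = Y2.card)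
    (p1 : ∀ e ∈ Y1, ∀ e' ∈ Q \ Y1, r e < r e')
    (p2 : ∀ e ∈ Y2, ∀ e' ∈ Q \ Y2, r e < r e') : Y1 = Y2 := by
  by_contra hne
  have h12 : ¬ Y1 ⊆ Y2 := fun h => hne (Finset.eq_of_subset_of_card_le h (le_of_eq hc.symm))
  have h21 : ¬ Y2 ⊆ Y1 := fun h => hne (Finset.eq_of_subset_of_card_le h (le_of_eq hc)).symm
  obtain ⟨e, he1, he2⟩ := Finset.not_subset.mp h12
  obtain ⟨f, hf2, hf1⟩ := Finset.not_subset.mp h21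
  have t1 := p1 e he1 f (Finset.mem_sdiff.mpr ⟨h2 hf2, hf1⟩)
  have t2 := p2 f hf2 e (Finset.mem_sdiff.mpr ⟨h1 he1, he2⟩)
  omega

/-- Existence of the follower's greedy response. -/
lemma bsp_resp_exists (r : α → ℕ) (Q : Finset α) (hr : Set.InjOn r Q) :
    ∀ n, n ≤ Q.card → ∃ Y, Y ⊆ Q ∧ Y.card = n ∧ ∀ e ∈ Y, ∀ e' ∈ Q \ Y, r e < r e' := by
  intro n
  induction n with
  | zero => intro _; exact ⟨∅, by simp⟩
  | succ n ih =>
      intro hn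
      obtain ⟨Y, hYQ, hYc, hYp⟩ := ih (Nat.le_of_succ_le hn)
      have hcard : (Q \ Y).card = Q.card - n := by rw [Finset.card_sdiff_of_subset hYQ, hYc]
      have hne : (Q \ Y).Nonempty := by
        rw [← Finset.card_pos, hcard]; omega
      obtain ⟨a, haQY, hamin⟩ := Finset.exists_min_image (Q \ Y) r hne
      obtain ⟨haQ, haY⟩ := Finset.mem_sdiff.mp haQY
      refine ⟨insert a Y, ?_, ?_, ?_⟩
      · exact Finset.insert_subset haQ hYQ
      · rw [Finset.card_insert_of_notMem haY, hYc]
      · intro e he e' he'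
        obtain ⟨he'Q, he'ne⟩ := Finset.mem_sdiff.mp he'
        have he'a : e' ≠ a := fun h => he'ne (h ▸ Finset.mem_insert_self _ _)
        have he'Y : e' ∉ Y := fun h => he'ne (Finset.mem_insert_of_mem h)
        rcases Finset.mem_insert.mp he with rfl | heY
        · have hle := hamin e' (Finset.mem_sdiff.mpr ⟨he'Q, he'Y⟩)
          have hne' : r e ≠ r e' := fun h => he'a (hr he'Q haQ h.symm)
          omega
        · exact hYp e heY e' (Finset.mem_sdiff.mpr ⟨he'Q, he'Y⟩)

lemma bsp_sum_Icc_bot (a b : ℕ) (h : a ≤ b) :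
    ∑ t ∈ Finset.Icc a b, t = a + ∑ t ∈ Finset.Icc (a + 1) b, t := by
  have he : Finset.Icc a b = insert a (Finset.Icc (a + 1) b) := by
    ext t; simp only [Finset.mem_Icc, Finset.mem_insert]; omega
  rw [he, Finset.sum_insert (by simp [Finset.mem_Icc])]

/-- Main exchange lemma: any feasible leader solution is dominated by some
greedy prefix solution. -/
lemma bsp_main {α : Type*} [DecidableEq α]
    (El Ef : Finset α) (hsub : El ⊆ Ef)
    (b : ℕ)
    (c : α → ℚ) (r : α → ℕ) (hr : Set.InjOn r Ef)
    (pl : ℕ → α)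
    (hinj : Set.InjOn pl (Finset.Icc 1 El.card))
    (himg : (Finset.Icc 1 El.card).image pl = El)
    (hsort : ∀ i j : ℕ, 1 ≤ i → i ≤ j → j ≤ El.card → c (pl i) ≤ c (pl j))
    (m : ℕ) :
    ∀ X Y : Finset α, X ⊆ El → X.card ≤ b →
      (Y ⊆ Ef \ X ∧ Y.card = b - X.card ∧
        ∀ e ∈ Y, ∀ e' ∈ (Ef \ X) \ Y, r e < r e') →
      (∑ t ∈ (Finset.Icc 1 El.card).filter (fun t => pl t ∈ X), t)
        + (∑ t ∈ Finset.Icc (X.card + 1) b, t) ≤ m →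
      ∃ k, k ≤ min b El.card ∧ ∀ Yk : Finset α,
        (Yk ⊆ Ef \ (Finset.Icc 1 k).image pl ∧ Yk.card = b - k ∧
          ∀ e ∈ Yk, ∀ e' ∈ (Ef \ (Finset.Icc 1 k).image pl) \ Yk, r e < r e') →
        ∑ e ∈ (Finset.Icc 1 k).image pl ∪ Yk, c e ≤ ∑ e ∈ X ∪ Y, c e := by
  induction m using Nat.strong_induction_on with
  | _ m IH =>
  intro X Y hXEl hXb hY hm
  obtain ⟨hYsub, hYcard, hYprop⟩ := hY
  have hkEl : X.card ≤ El.card := Finset.card_le_card hXEl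
  -- F: the index set of X
  set F := (Finset.Icc 1 El.card).filter (fun t => pl t ∈ X) with hF
  have hIX : F.image pl = X := by
    apply Finset.Subset.antisymm
    · intro x hx
      obtain ⟨t, ht, rfl⟩ := Finset.mem_image.mp hx
      exact (Finset.mem_filter.mp ht).2
    · intro x hx
      have hx' : x ∈ (Finset.Icc 1 El.card).image pl := by rw [himg]; exact hXEl hx
      obtain ⟨t, ht, rfl⟩ := Finset.mem_image.mp hx'
      exact Finset.mem_image.mpr ⟨t, Finset.mem_filter.mpr ⟨ht, hx⟩, rfl⟩
  have hFcard : F.card = X.card := by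
    rw [← hIX]
    exact (Finset.card_image_of_injOn
      (hinj.mono (Finset.coe_subset.mpr (Finset.filter_subset _ _)))).symm
  by_cases hpre : X = (Finset.Icc 1 X.card).image pl
  · -- X is already a prefix
    refine ⟨X.card, le_min hXb hkEl, ?_⟩
    intro Yk hYk
    rw [← hpre] at hYk ⊢
    obtain ⟨hYk1, hYk2, hYk3⟩ := hYk
    have : Yk = Y := bsp_resp_unique hYk1 hYsub (by rw [hYk2, hYcard]) hYk3 hYprop
    rw [this]
  · -- X is not a prefix: find an exchange
    have hjex : ∃ j ∈ F, X.card < j := by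
      by_contra hcon
      push_neg at hcon
      have hsubF : F ⊆ Finset.Icc 1 X.card := by
        intro t ht
        have h1 := (Finset.mem_Icc.mp (Finset.mem_of_mem_filter t ht)).1
        exact Finset.mem_Icc.mpr ⟨h1, hcon t ht⟩
      have hFeq : F = Finset.Icc 1 X.card :=
        Finset.eq_of_subset_of_card_le hsubF (by rw [hFcard, Nat.card_Icc]; omega)
      exact hpre (by rw [← hFeq, hIX])
    have hiex : ∃ i, 1 ≤ i ∧ i ≤ X.card ∧ pl i ∉ X := by
      by_contra hcon
      push_neg at hcon
      apply hpre
      have hPX : (Finset.Icc 1 X.card).image pl ⊆ X := by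
        intro x hx
        obtain ⟨t, ht, rfl⟩ := Finset.mem_image.mp hx
        obtain ⟨ht1, ht2⟩ := Finset.mem_Icc.mp ht
        exact hcon t ht1 ht2
      have hPcard : ((Finset.Icc 1 X.card).image pl).card = X.card := by
        rw [Finset.card_image_of_injOn (hinj.mono (by
          intro t ht
          simp only [Finset.coe_subset, Finset.mem_coe, Finset.mem_Icc] at *
          omega)), Nat.card_Icc]
        omega
      exact (Finset.eq_of_subset_of_card_le hPX (by rw [hPcard])).symm
    obtain ⟨j, hjF, hjgt⟩ := hjex
    obtain ⟨i, hi1, hik, hpiX⟩ := hiex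
    have hjIcc : j ∈ Finset.Icc 1 El.card := Finset.mem_of_mem_filter j hjF
    have hxX : pl j ∈ X := (Finset.mem_filter.mp hjF).2
    have hjEl : j ≤ El.card := (Finset.mem_Icc.mp hjIcc).2
    have hiIcc : i ∈ Finset.Icc 1 El.card := Finset.mem_Icc.mpr ⟨hi1, by omega⟩
    have hcpx : c (pl i) ≤ c (pl j) := hsort i j hi1 (by omega) hjEl
    have hpEl : pl i ∈ El := by rw [← himg]; exact Finset.mem_image_of_mem _ hiIcc
    have hxEl : pl j ∈ El := hXEl hxX
    have hpEf : pl i ∈ Ef := hsub hpEl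
    have hxEf : pl j ∈ Ef := hsub hxEl
    have hpx_ne : pl i ≠ pl j := fun h => hpiX (h ▸ hxX)
    have hYdisjX : ∀ a ∈ Y, a ∉ X := fun a ha => (Finset.mem_sdiff.mp (hYsub ha)).2
    have hxnY : pl j ∉ Y := fun h => hYdisjX _ h hxX
    have hiF : i ∉ F := by
      intro h; exact hpiX (Finset.mem_filter.mp h).2
    have hFsum_j : (∑ t ∈ F.erase j, t) + j = ∑ t ∈ F, t :=
      Finset.sum_erase_add F _ hjF
    by_cases hpY : pl i ∈ Y
    · -- GROW: X₁ = insert (pl i) X, Y₁ = Y.erase (pl i); union unchanged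
      have hkb : X.card < b := by
        have hpos : 0 < Y.card := Finset.card_pos.mpr ⟨pl i, hpY⟩
        omega
      have hcard1 : (insert (pl i) X).card = X.card + 1 :=
        Finset.card_insert_of_notMem hpiX
      have hX1El : insert (pl i) X ⊆ El := Finset.insert_subset hpEl hXEl
      have hresp1 : Y.erase (pl i) ⊆ Ef \ insert (pl i) X ∧
          (Y.erase (pl i)).card = b - (insert (pl i) X).card ∧
          ∀ e ∈ Y.erase (pl i), ∀ e' ∈ (Ef \ insert (pl i) X) \ Y.erase (pl i),
            r e < r e' := by
        refine ⟨?_, ?_, ?_⟩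
        · intro e he
          obtain ⟨hep, heY⟩ := Finset.mem_erase.mp he
          obtain ⟨heEf, heX⟩ := Finset.mem_sdiff.mp (hYsub heY)
          refine Finset.mem_sdiff.mpr ⟨heEf, ?_⟩
          intro hmem
          rcases Finset.mem_insert.mp hmem with h | h
          · exact hep h
          · exact heX h
        · rw [Finset.card_erase_of_mem hpY, hYcard, hcard1]; omega
        · intro e he e' he'
          obtain ⟨hep, heY⟩ := Finset.mem_erase.mp he
          obtain ⟨he'1, he'2⟩ := Finset.mem_sdiff.mp he'
          obtain ⟨he'Ef, he'notX1⟩ := Finset.mem_sdiff.mp he'1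
          have he'p : e' ≠ pl i := fun h => he'notX1 (h ▸ Finset.mem_insert_self _ _)
          have he'X : e' ∉ X := fun h => he'notX1 (Finset.mem_insert_of_mem h)
          have he'Y : e' ∉ Y := fun h => he'2 (Finset.mem_erase.mpr ⟨he'p, h⟩)
          exact hYprop e heY e'
            (Finset.mem_sdiff.mpr ⟨Finset.mem_sdiff.mpr ⟨he'Ef, he'X⟩, he'Y⟩)
      have hunion : insert (pl i) X ∪ Y.erase (pl i) = X ∪ Y := by
        ext a
        by_cases hap : a = pl i
        · subst hap; simp [hpY]
        · simp only [Finset.mem_union, Finset.mem_insert, Finset.mem_erase]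
          constructor
          · rintro ((h | h) | ⟨_, h⟩)
            · exact absurd h hap
            · exact Or.inl h
            · exact Or.inr h
          · rintro (h | h)
            · exact Or.inl (Or.inr h)
            · exact Or.inr ⟨hap, h⟩
      -- measure decreases
      have hfeq : (Finset.Icc 1 El.card).filter (fun t => pl t ∈ insert (pl i) X)
          = insert i F := by
        ext t
        simp only [Finset.mem_filter, Finset.mem_insert, hF]
        constructor
        · rintro ⟨htI, h | h⟩
          · exact Or.inl (hinj (Finset.mem_coe.mpr htI) (Finset.mem_coe.mpr hiIcc) h)
          · exact Or.inr ⟨htI, h⟩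
        · rintro (rfl | ⟨htI, h⟩)
          · exact ⟨hiIcc, Or.inl rfl⟩
          · exact ⟨htI, Or.inr h⟩
      have e1 : ∑ t ∈ (Finset.Icc 1 El.card).filter (fun t => pl t ∈ insert (pl i) X), t
          = i + ∑ t ∈ F, t := by rw [hfeq, Finset.sum_insert hiF]
      have e2 : ∑ t ∈ Finset.Icc (X.card + 1) b, t
          = (X.card + 1) + ∑ t ∈ Finset.Icc (X.card + 2) b, t :=
        bsp_sum_Icc_bot _ _ (by omega)
      have e3 : ∑ t ∈ Finset.Icc ((insert (pl i) X).card + 1) b, t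
          = ∑ t ∈ Finset.Icc (X.card + 2) b, t := by rw [hcard1]
      have hM1 : (∑ t ∈ (Finset.Icc 1 El.card).filter (fun t => pl t ∈ insert (pl i) X), t)
          + (∑ t ∈ Finset.Icc ((insert (pl i) X).card + 1) b, t) < m := by
        rw [e1, e3]; omega
      obtain ⟨k', hk', hle⟩ := IH _ hM1 (insert (pl i) X) (Y.erase (pl i))
        hX1El (by omega) hresp1 le_rfl
      refine ⟨k', hk', fun Yk hYk => ?_⟩
      have := hle Yk hYk
      rwa [hunion] at this
    · by_cases hqex : ∃ q ∈ Y, r (pl j) < r q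
      · -- SHRINK: X₁ = X.erase (pl j), Y₁ = insert (pl j) Y; union unchanged
        obtain ⟨q, hqY, hqlt⟩ := hqex
        have hxpos : 1 ≤ X.card := Finset.card_pos.mpr ⟨pl j, hxX⟩
        have hcard1 : (X.erase (pl j)).card = X.card - 1 :=
          Finset.card_erase_of_mem hxX
        have hX1El : X.erase (pl j) ⊆ El := (Finset.erase_subset _ _).trans hXEl
        have hX1b : (X.erase (pl j)).card ≤ b := by omega
        have hresp1 : insert (pl j) Y ⊆ Ef \ X.erase (pl j) ∧
            (insert (pl j) Y).card = b - (X.erase (pl j)).card ∧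
            ∀ e ∈ insert (pl j) Y, ∀ e' ∈ (Ef \ X.erase (pl j)) \ insert (pl j) Y,
              r e < r e' := by
          refine ⟨?_, ?_, ?_⟩
          · intro e he
            rcases Finset.mem_insert.mp he with rfl | heY
            · exact Finset.mem_sdiff.mpr ⟨hxEf, Finset.notMem_erase _ _⟩
            · obtain ⟨heEf, heX⟩ := Finset.mem_sdiff.mp (hYsub heY)
              exact Finset.mem_sdiff.mpr ⟨heEf, fun h => heX (Finset.mem_of_mem_erase h)⟩
          · rw [Finset.card_insert_of_notMem hxnY, hYcard, hcard1]; omega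
          · intro e he e' he'
            obtain ⟨he'1, he'2⟩ := Finset.mem_sdiff.mp he'
            obtain ⟨he'Ef, he'notX1⟩ := Finset.mem_sdiff.mp he'1
            have he'x : e' ≠ pl j := fun h => he'2 (h ▸ Finset.mem_insert_self _ _)
            have he'Y : e' ∉ Y := fun h => he'2 (Finset.mem_insert_of_mem h)
            have he'X : e' ∉ X := fun h => he'notX1 (Finset.mem_erase.mpr ⟨he'x, h⟩)
            have he'mem : e' ∈ (Ef \ X) \ Y :=
              Finset.mem_sdiff.mpr ⟨Finset.mem_sdiff.mpr ⟨he'Ef, he'X⟩, he'Y⟩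
            rcases Finset.mem_insert.mp he with rfl | heY
            · exact lt_trans hqlt (hYprop q hqY e' he'mem)
            · exact hYprop e heY e' he'mem
        have hunion : X.erase (pl j) ∪ insert (pl j) Y = X ∪ Y := by
          ext a
          by_cases hax : a = pl j
          · subst hax; simp [hxX]
          · simp only [Finset.mem_union, Finset.mem_erase, Finset.mem_insert]
            constructor
            · rintro (⟨_, h⟩ | (h | h))
              · exact Or.inl h
              · exact absurd h hax
              · exact Or.inr h
            · rintro (h | h)
              · exact Or.inl ⟨hax, h⟩
              · exact Or.inr (Or.inr h)
        -- measure decreases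
        have hfeq : (Finset.Icc 1 El.card).filter (fun t => pl t ∈ X.erase (pl j))
            = F.erase j := by
          ext t
          simp only [Finset.mem_filter, Finset.mem_erase, hF]
          constructor
          · rintro ⟨htI, hne, hX'⟩
            exact ⟨fun h => hne (h ▸ rfl), htI, hX'⟩
          · rintro ⟨hne, htI, hX'⟩
            exact ⟨htI, fun h =>
              hne (hinj (Finset.mem_coe.mpr htI) (Finset.mem_coe.mpr hjIcc) h), hX'⟩
        have e1 : ∑ t ∈ (Finset.Icc 1 El.card).filter (fun t => pl t ∈ X.erase (pl j)), t
            = ∑ t ∈ F.erase j, t := by rw [hfeq]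
        have e2 : ∑ t ∈ Finset.Icc X.card b, t
            = X.card + ∑ t ∈ Finset.Icc (X.card + 1) b, t :=
          bsp_sum_Icc_bot _ _ hXb
        have e3 : ∑ t ∈ Finset.Icc ((X.erase (pl j)).card + 1) b, t
            = ∑ t ∈ Finset.Icc X.card b, t := by
          congr 1
          rw [hcard1]
          congr 1
          omega
        have hM1 : (∑ t ∈ (Finset.Icc 1 El.card).filter (fun t => pl t ∈ X.erase (pl j)), t)
            + (∑ t ∈ Finset.Icc ((X.erase (pl j)).card + 1) b, t) < m := by
          rw [e1, e3, e2]; omega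
        obtain ⟨k', hk', hle⟩ := IH _ hM1 (X.erase (pl j)) (insert (pl j) Y)
          hX1El hX1b hresp1 le_rfl
        refine ⟨k', hk', fun Yk hYk => ?_⟩
        have := hle Yk hYk
        rwa [hunion] at this
      · -- SWAP: X₁ = insert (pl i) (X.erase (pl j)), Y₁ = Y; cost decreases
        push_neg at hqex
        have hxpos : 1 ≤ X.card := Finset.card_pos.mpr ⟨pl j, hxX⟩
        have hpnotX1 : pl i ∉ X.erase (pl j) := fun h => hpiX (Finset.mem_of_mem_erase h)
        have hcard1 : (insert (pl i) (X.erase (pl j))).card = X.card := by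
          rw [Finset.card_insert_of_notMem hpnotX1, Finset.card_erase_of_mem hxX]
          omega
        have hX1El : insert (pl i) (X.erase (pl j)) ⊆ El :=
          Finset.insert_subset hpEl ((Finset.erase_subset _ _).trans hXEl)
        have hresp1 : Y ⊆ Ef \ insert (pl i) (X.erase (pl j)) ∧
            Y.card = b - (insert (pl i) (X.erase (pl j))).card ∧
            ∀ e ∈ Y, ∀ e' ∈ (Ef \ insert (pl i) (X.erase (pl j))) \ Y, r e < r e' := by
          refine ⟨?_, by rw [hcard1, hYcard], ?_⟩
          · intro e he
            obtain ⟨heEf, heX⟩ := Finset.mem_sdiff.mp (hYsub he)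
            refine Finset.mem_sdiff.mpr ⟨heEf, ?_⟩
            intro hmem
            rcases Finset.mem_insert.mp hmem with h | h
            · exact hpY (h ▸ he)
            · exact heX (Finset.mem_of_mem_erase h)
          · intro e he e' he'
            obtain ⟨he'1, he'Y⟩ := Finset.mem_sdiff.mp he'
            obtain ⟨he'Ef, he'notX1⟩ := Finset.mem_sdiff.mp he'1
            by_cases he'x : e' = pl j
            · have hle := hqex e he
              have hne' : r e ≠ r (pl j) := fun h =>
                (hYdisjX e he) (by
                  rw [hr (Finset.mem_sdiff.mp (hYsub he)).1 hxEf h]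
                  exact hxX)
              rw [he'x]
              omega
            · have he'p : e' ≠ pl i := fun h => he'notX1 (h ▸ Finset.mem_insert_self _ _)
              have he'X : e' ∉ X := fun h =>
                he'notX1 (Finset.mem_insert_of_mem (Finset.mem_erase.mpr ⟨he'x, h⟩))
              exact hYprop e he e'
                (Finset.mem_sdiff.mpr ⟨Finset.mem_sdiff.mpr ⟨he'Ef, he'X⟩, he'Y⟩)
        have hunion : insert (pl i) (X.erase (pl j)) ∪ Y
            = insert (pl i) ((X ∪ Y).erase (pl j)) := by
          ext a
          by_cases hap : a = pl i
          · subst hap; simp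
          · by_cases hax : a = pl j
            · subst hax
              simp only [Finset.mem_union, Finset.mem_insert, Finset.mem_erase]
              constructor
              · rintro ((h | ⟨hne, _⟩) | h)
                · exact absurd h hap
                · exact absurd rfl hne
                · exact absurd h hxnY
              · rintro (h | ⟨hne, _⟩)
                · exact absurd h hap
                · exact absurd rfl hne
            · simp only [Finset.mem_union, Finset.mem_insert, Finset.mem_erase]
              constructor
              · rintro ((h | ⟨_, h⟩) | h)
                · exact absurd h hap
                · exact Or.inr ⟨hax, Or.inl h⟩
                · exact Or.inr ⟨hax, Or.inr h⟩
              · rintro (h | ⟨_, h | h⟩)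
                · exact absurd h hap
                · exact Or.inl (Or.inr ⟨hax, h⟩)
                · exact Or.inr h
        -- cost comparison
        have hpnotXY : pl i ∉ (X ∪ Y).erase (pl j) := by
          intro h
          rcases Finset.mem_union.mp (Finset.mem_of_mem_erase h) with h' | h'
          · exact hpiX h'
          · exact hpY h'
        have hxXY : pl j ∈ X ∪ Y := Finset.mem_union_left _ hxX
        have hcost : ∑ e ∈ insert (pl i) (X.erase (pl j)) ∪ Y, c e ≤ ∑ e ∈ X ∪ Y, c e := by
          rw [hunion, Finset.sum_insert hpnotXY, Finset.sum_erase_eq_sub hxXY]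
          linarith
        -- measure decreases
        have hfeq : (Finset.Icc 1 El.card).filter
            (fun t => pl t ∈ insert (pl i) (X.erase (pl j))) = insert i (F.erase j) := by
          ext t
          simp only [Finset.mem_filter, Finset.mem_insert, Finset.mem_erase, hF]
          constructor
          · rintro ⟨htI, h | ⟨hne, hX'⟩⟩
            · exact Or.inl (hinj (Finset.mem_coe.mpr htI) (Finset.mem_coe.mpr hiIcc) h)
            · exact Or.inr ⟨fun h => hne (h ▸ rfl), htI, hX'⟩
          · rintro (rfl | ⟨hne, htI, hX'⟩)
            · exact ⟨hiIcc, Or.inl rfl⟩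
            · exact ⟨htI, Or.inr ⟨fun h =>
                hne (hinj (Finset.mem_coe.mpr htI) (Finset.mem_coe.mpr hjIcc) h), hX'⟩⟩
        have hinotFe : i ∉ F.erase j := fun h => hiF (Finset.mem_of_mem_erase h)
        have e1 : ∑ t ∈ (Finset.Icc 1 El.card).filter
            (fun t => pl t ∈ insert (pl i) (X.erase (pl j))), t
            = i + ∑ t ∈ F.erase j, t := by rw [hfeq, Finset.sum_insert hinotFe]
        have e3 : ∑ t ∈ Finset.Icc ((insert (pl i) (X.erase (pl j))).card + 1) b, t
            = ∑ t ∈ Finset.Icc (X.card + 1) b, t := by rw [hcard1]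
        have hM1 : (∑ t ∈ (Finset.Icc 1 El.card).filter
              (fun t => pl t ∈ insert (pl i) (X.erase (pl j))), t)
            + (∑ t ∈ Finset.Icc ((insert (pl i) (X.erase (pl j))).card + 1) b, t) < m := by
          rw [e1, e3]; omega
        obtain ⟨k', hk', hle⟩ := IH _ hM1 (insert (pl i) (X.erase (pl j))) Y
          hX1El (by omega) hresp1 le_rfl
        refine ⟨k', hk', fun Yk hYk => ?_⟩
        exact le_trans (hle Yk hYk) hcost

end BSPAux

/-- In the Bilevel Selection Problem with `E_l ⊆ E_f`, where the follower,
given a feasible leader's solution `X` (`|X| ≤ b`), greedily selects the first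
`b − |X|` items of `E_f \ X` according to a fixed total order (given by the
injective rank function `r`), there always exists an optimal leader's solution
that is a prefix `{p_l 1, …, p_l b_l}` of the leader's greedy order sorting
`E_l` by nondecreasing `c`-values. -/
theorem bilevel_selection_prefix_optimal {α : Type*} [DecidableEq α]
    (El Ef : Finset α) (hsub : El ⊆ Ef)
    (b : ℕ) (hb : b ≤ Ef.card)
    (c : α → ℚ) (r : α → ℕ) (hr : Set.InjOn r Ef)
    (pl : ℕ → α)
    (hinj : Set.InjOn pl (Finset.Icc 1 El.card))
    (himg : (Finset.Icc 1 El.card).image pl = El)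
    (hsort : ∀ i j : ℕ, 1 ≤ i → i ≤ j → j ≤ El.card → c (pl i) ≤ c (pl j)) :
    ∃ bl : ℕ, bl ≤ min b El.card ∧
      ∀ Y : Finset α,
        (Y ⊆ Ef \ (Finset.Icc 1 bl).image pl ∧ Y.card = b - bl ∧
          ∀ e ∈ Y, ∀ e' ∈ (Ef \ (Finset.Icc 1 bl).image pl) \ Y, r e < r e') →
        ∀ X' Y' : Finset α, X' ⊆ El → X'.card ≤ b →
          (Y' ⊆ Ef \ X' ∧ Y'.card = b - X'.card ∧
            ∀ e ∈ Y', ∀ e' ∈ (Ef \ X') \ Y', r e < r e') →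
          ∑ e ∈ (Finset.Icc 1 bl).image pl ∪ Y, c e ≤ ∑ e ∈ X' ∪ Y', c e := by
  have hPsub : ∀ k, k ≤ El.card → (Finset.Icc 1 k).image pl ⊆ Ef := by
    intro k hk x hx
    obtain ⟨t, ht, rfl⟩ := Finset.mem_image.mp hx
    obtain ⟨ht1, ht2⟩ := Finset.mem_Icc.mp ht
    apply hsub
    rw [← himg]
    exact Finset.mem_image_of_mem _ (Finset.mem_Icc.mpr ⟨ht1, by omega⟩)
  have hPcard : ∀ k, k ≤ El.card → ((Finset.Icc 1 k).image pl).card = k := by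
    intro k hk
    rw [Finset.card_image_of_injOn (hinj.mono (by
      intro t ht
      simp only [Finset.mem_coe, Finset.mem_Icc] at *
      omega)), Nat.card_Icc]
    omega
  have hex : ∀ k : ℕ, ∃ Yk : Finset α, k ≤ min b El.card →
      (Yk ⊆ Ef \ (Finset.Icc 1 k).image pl ∧ Yk.card = b - k ∧
        ∀ e ∈ Yk, ∀ e' ∈ (Ef \ (Finset.Icc 1 k).image pl) \ Yk, r e < r e') := by
    intro k
    by_cases hk : k ≤ min b El.card
    · have hkb : k ≤ b := le_trans hk (min_le_left _ _)
      have hkEl : k ≤ El.card := le_trans hk (min_le_right _ _)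
      have hQcard : (Ef \ (Finset.Icc 1 k).image pl).card = Ef.card - k := by
        rw [Finset.card_sdiff_of_subset (hPsub k hkEl), hPcard k hkEl]
      obtain ⟨Yk, h1, h2, h3⟩ := bsp_resp_exists r (Ef \ (Finset.Icc 1 k).image pl)
        (hr.mono (fun x hx => (Finset.mem_sdiff.mp hx).1)) (b - k)
        (by rw [hQcard]; omega)
      exact ⟨Yk, fun _ => ⟨h1, h2, h3⟩⟩
    · exact ⟨∅, fun h => absurd h hk⟩
  choose Resp hResp using hex
  obtain ⟨bl, hblmem, hblmin⟩ := Finset.exists_min_image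
    (Finset.range (min b El.card + 1))
    (fun k => ∑ e ∈ (Finset.Icc 1 k).image pl ∪ Resp k, c e)
    ⟨0, Finset.mem_range.mpr (by omega)⟩
  have hbl : bl ≤ min b El.card := by
    have := Finset.mem_range.mp hblmem
    omega
  refine ⟨bl, hbl, ?_⟩
  intro Y hY X' Y' hX'El hX'b hY'
  obtain ⟨hR1, hR2, hR3⟩ := hResp bl hbl
  have hYeq : Y = Resp bl := bsp_resp_unique hY.1 hR1 (by rw [hY.2.1, hR2]) hY.2.2 hR3
  obtain ⟨k, hk, hkle⟩ := bsp_main El Ef hsub b c r hr pl hinj himg hsort _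
    X' Y' hX'El hX'b hY' le_rfl
  calc ∑ e ∈ (Finset.Icc 1 bl).image pl ∪ Y, c e
      = ∑ e ∈ (Finset.Icc 1 bl).image pl ∪ Resp bl, c e := by rw [hYeq]
    _ ≤ ∑ e ∈ (Finset.Icc 1 k).image pl ∪ Resp k, c e :=
        hblmin k (Finset.mem_range.mpr (by omega))
    _ ≤ ∑ e ∈ X' ∪ Y', c e := hkle (Resp k) (hResp k hk)
end

section
/- In the Bilevel Selection Problem with E_l ⊆ E_f, let X be a feasible leader's solution that is not a prefix of the leader's greedy order, let e₁ = p_l(i₁(X)) ∈ X and e₂ = p_l(i₂(X)) ∉ X with i₁(X) > i₂(X) (so c(e₁) ≥ c(e₂)), and let Y be the follower's greedy response to X. Then at least one of the leader's solutions X ∪ {e₂}, X \ {e₁}, or (X \ {e₁}) ∪ {e₂} is feasible and achieves a leader's objective value c(X' ∪ Y') ≤ c(X ∪ Y), where Y' denotes the follower's greedy response to the respective modified solution X'. -/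
/-- The follower's greedy response to a leader's solution `X`: the first
`b − |X|` items of `E_f \ X` with respect to the fixed total order given by
the rank function `r`. -/
def GreedyResp {α : Type*} [DecidableEq α] (Ef : Finset α) (b : ℕ) (r : α → ℕ)
    (X Y : Finset α) : Prop :=
  Y ⊆ Ef \ X ∧ Y.card = b - X.card ∧ ∀ e ∈ Y, ∀ e' ∈ (Ef \ X) \ Y, r e < r e'

/-- The greedy response is unique. -/
lemma greedyResp_unique {α : Type*} [DecidableEq α] {Ef : Finset α} {b : ℕ} {r : α → ℕ}
    {X Y₁ Y₂ : Finset α} (h₁ : GreedyResp Ef b r X Y₁) (h₂ : GreedyResp Ef b r X Y₂) :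
    Y₁ = Y₂ := by
  obtain ⟨hs₁, hc₁, ho₁⟩ := h₁
  obtain ⟨hs₂, hc₂, ho₂⟩ := h₂
  by_contra hne
  have hns₁ : ¬ Y₁ ⊆ Y₂ := fun h => hne (Finset.eq_of_subset_of_card_le h (by omega))
  have hns₂ : ¬ Y₂ ⊆ Y₁ := fun h => hne ((Finset.eq_of_subset_of_card_le h (by omega)).symm)
  obtain ⟨e, he, heN⟩ := Finset.not_subset.mp hns₁
  obtain ⟨e', he', heN'⟩ := Finset.not_subset.mp hns₂
  have h1 : r e < r e' := ho₁ e he e' (Finset.mem_sdiff.mpr ⟨hs₂ he', heN'⟩)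
  have h2 : r e' < r e := ho₂ e' he' e (Finset.mem_sdiff.mpr ⟨hs₁ he, heN⟩)
  omega

/-- Exchange lemma for the Bilevel Selection Problem with `E_l ⊆ E_f`: if the
leader's solution `X` is not a prefix of the leader's greedy order, witnessed
by `e₁ = p_l i₁ ∈ X` (largest index in `X`) and `e₂ = p_l i₂ ∉ X` (smallest
index outside `X`) with `i₂ < i₁` (whence `c e₂ ≤ c e₁`), then one of the
modified leader's solutions `X ∪ {e₂}`, `X \ {e₁}`, `(X \ {e₁}) ∪ {e₂}` is
feasible and achieves a leader's objective value no worse than that of `X`. -/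
theorem bilevel_selection_exchange {α : Type*} [DecidableEq α]
    (El Ef : Finset α) (hsub : El ⊆ Ef)
    (b : ℕ) (hb : b ≤ Ef.card)
    (c : α → ℚ) (r : α → ℕ) (hr : Set.InjOn r Ef)
    (pl : ℕ → α)
    (hinj : Set.InjOn pl (Finset.Icc 1 El.card))
    (himg : (Finset.Icc 1 El.card).image pl = El)
    (hsort : ∀ i j : ℕ, 1 ≤ i → i ≤ j → j ≤ El.card → c (pl i) ≤ c (pl j))
    (X : Finset α) (hX : X ⊆ El) (hXb : X.card ≤ b)
    (i₁ i₂ : ℕ) (hi₁mem : i₁ ∈ Finset.Icc 1 El.card) (hi₂mem : i₂ ∈ Finset.Icc 1 El.card)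
    (he₁ : pl i₁ ∈ X) (hi₁max : ∀ j ∈ Finset.Icc 1 El.card, pl j ∈ X → j ≤ i₁)
    (he₂ : pl i₂ ∉ X) (hi₂min : ∀ j ∈ Finset.Icc 1 El.card, pl j ∉ X → i₂ ≤ j)
    (hlt : i₂ < i₁)
    (Y : Finset α) (hY : GreedyResp Ef b r X Y) :
    ∃ X' ∈ ({X ∪ {pl i₂}, X \ {pl i₁}, (X \ {pl i₁}) ∪ {pl i₂}} : Set (Finset α)),
      X'.card ≤ b ∧
      ∀ Y' : Finset α, GreedyResp Ef b r X' Y' →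
        ∑ e ∈ X' ∪ Y', c e ≤ ∑ e ∈ X ∪ Y, c e := by
  obtain ⟨hYsub, hYcard, hYord⟩ := hY
  set e₁ := pl i₁ with he₁def
  set e₂ := pl i₂ with he₂def
  rw [Finset.mem_Icc] at hi₁mem hi₂mem
  have hc : c e₂ ≤ c e₁ := hsort i₂ i₁ hi₂mem.1 hlt.le hi₁mem.2
  have he₂El : e₂ ∈ El := by
    rw [← himg]
    exact Finset.mem_image_of_mem pl (Finset.mem_Icc.mpr hi₂mem)
  have he₂Ef : e₂ ∈ Ef := hsub he₂El
  have he₁Ef : e₁ ∈ Ef := hsub (hX he₁)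
  have he₁Y : e₁ ∉ Y := fun h => (Finset.mem_sdiff.mp (hYsub h)).2 he₁
  have hne : e₂ ≠ e₁ := fun h => he₂ (h ▸ he₁)
  have hXpos : 1 ≤ X.card := Finset.card_pos.mpr ⟨e₁, he₁⟩
  by_cases h2Y : e₂ ∈ Y
  · -- Case 1: e₂ ∈ Y; take X' = X ∪ {e₂}
    have hYpos : 1 ≤ Y.card := Finset.card_pos.mpr ⟨e₂, h2Y⟩
    have hins : X ∪ {e₂} = insert e₂ X := by ext a; simp [or_comm]
    have hcard' : (X ∪ {e₂}).card = X.card + 1 := by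
      rw [hins, Finset.card_insert_of_notMem he₂]
    refine ⟨X ∪ {e₂}, Or.inl rfl, by omega, ?_⟩
    intro Y' hY'
    have hG : GreedyResp Ef b r (X ∪ {e₂}) (Y.erase e₂) := by
      refine ⟨?_, ?_, ?_⟩
      · intro e he
        rw [Finset.mem_erase] at he
        have := Finset.mem_sdiff.mp (hYsub he.2)
        simp only [Finset.mem_sdiff, Finset.mem_union, Finset.mem_singleton]
        exact ⟨this.1, by tauto⟩
      · rw [Finset.card_erase_of_mem h2Y, hYcard, hcard']
        omega
      · intro e he e' he'
        rw [Finset.mem_erase] at he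
        rw [Finset.mem_sdiff] at he'
        obtain ⟨he'1, he'2⟩ := he'
        rw [Finset.mem_sdiff, Finset.mem_union, Finset.mem_singleton] at he'1
        push_neg at he'1
        have h2 : e' ∉ Y := fun h => he'2 (Finset.mem_erase.mpr ⟨he'1.2.2, h⟩)
        exact hYord e he.2 e' (Finset.mem_sdiff.mpr ⟨Finset.mem_sdiff.mpr
          ⟨he'1.1, he'1.2.1⟩, h2⟩)
    have hYe : Y' = Y.erase e₂ := greedyResp_unique hY' hG
    have hset : (X ∪ {e₂}) ∪ Y.erase e₂ = X ∪ Y := by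
      ext a
      by_cases ha : a = e₂ <;> simp_all [Finset.mem_erase]
    rw [hYe, hset]
  · -- e₂ ∉ Y
    by_cases hcase : ∀ e ∈ Y, r e < r e₁
    · -- Case 2a: take X' = (X \ {e₁}) ∪ {e₂}
      have herase : X \ {e₁} = X.erase e₁ := Finset.sdiff_singleton_eq_erase e₁ X
      have he₂er : e₂ ∉ X.erase e₁ := fun h => he₂ (Finset.mem_of_mem_erase h)
      have hins : X.erase e₁ ∪ {e₂} = insert e₂ (X.erase e₁) := by ext a; simp [or_comm]
      have hcard' : ((X \ {e₁}) ∪ {e₂}).card = X.card := by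
        rw [herase, hins, Finset.card_insert_of_notMem he₂er,
          Finset.card_erase_of_mem he₁]
        omega
      refine ⟨(X \ {e₁}) ∪ {e₂}, Or.inr (Or.inr rfl), by omega, ?_⟩
      intro Y' hY'
      have hG : GreedyResp Ef b r ((X \ {e₁}) ∪ {e₂}) Y := by
        refine ⟨?_, by rw [hYcard, hcard'], ?_⟩
        · intro e he
          have hm := Finset.mem_sdiff.mp (hYsub he)
          simp only [herase, Finset.mem_sdiff, Finset.mem_union, Finset.mem_singleton,
            Finset.mem_erase]
          refine ⟨hm.1, ?_⟩
          rintro (⟨-, h⟩ | h)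
          · exact hm.2 h
          · exact h2Y (h ▸ he)
        · intro e he e' he'
          rw [Finset.mem_sdiff] at he'
          obtain ⟨he'1, he'2⟩ := he'
          rw [herase, Finset.mem_sdiff, Finset.mem_union, Finset.mem_singleton,
            Finset.mem_erase] at he'1
          push_neg at he'1
          by_cases h' : e' = e₁
          · exact h' ▸ hcase e he
          · refine hYord e he e' (Finset.mem_sdiff.mpr ⟨Finset.mem_sdiff.mpr
              ⟨he'1.1, he'1.2.1 h'⟩, he'2⟩)
      have hYe : Y' = Y := greedyResp_unique hY' hG
      have he₁XY : e₁ ∈ X ∪ Y := Finset.mem_union_left Y he₁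
      have he₂XY : e₂ ∉ (X ∪ Y).erase e₁ := by
        simp only [Finset.mem_erase, Finset.mem_union]
        tauto
      have hset : ((X \ {e₁}) ∪ {e₂}) ∪ Y = insert e₂ ((X ∪ Y).erase e₁) := by
        ext a
        by_cases h1 : a = e₁ <;> by_cases h2 : a = e₂ <;>
          simp_all [Finset.mem_erase, herase]
      rw [hYe, hset, Finset.sum_insert he₂XY, Finset.sum_erase_eq_sub he₁XY]
      linarith
    · -- Case 2b: take X' = X \ {e₁}
      push_neg at hcase
      obtain ⟨e₀, he₀Y, he₀r⟩ := hcase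
      have herase : X \ {e₁} = X.erase e₁ := Finset.sdiff_singleton_eq_erase e₁ X
      have hcard' : (X \ {e₁}).card = X.card - 1 := by
        rw [herase, Finset.card_erase_of_mem he₁]
      refine ⟨X \ {e₁}, Or.inr (Or.inl rfl), by rw [hcard']; omega, ?_⟩
      intro Y' hY'
      have hG : GreedyResp Ef b r (X \ {e₁}) (insert e₁ Y) := by
        refine ⟨?_, ?_, ?_⟩
        · intro e he
          rw [Finset.mem_insert] at he
          simp only [herase, Finset.mem_sdiff, Finset.mem_erase, not_and]
          rcases he with h | h
          · exact ⟨h ▸ he₁Ef, fun hne' _ => (hne' h).elim⟩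
          · have := Finset.mem_sdiff.mp (hYsub h)
            exact ⟨this.1, fun _ h' => this.2 h'⟩
        · rw [Finset.card_insert_of_notMem he₁Y, hYcard, hcard']
          omega
        · intro e he e' he'
          simp only [herase, Finset.mem_sdiff, Finset.mem_erase, not_and,
            Finset.mem_insert, not_or] at he'
          have he'X : e' ∉ X := fun h => (he'.1.2 (he'.2.1) h)
          have he'mem : e' ∈ (Ef \ X) \ Y :=
            Finset.mem_sdiff.mpr ⟨Finset.mem_sdiff.mpr ⟨he'.1.1, he'X⟩, he'.2.2⟩
          rw [Finset.mem_insert] at he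
          rcases he with h | h
          · have := hYord e₀ he₀Y e' he'mem
            rw [h]
            omega
          · exact hYord e h e' he'mem
      have hYe : Y' = insert e₁ Y := greedyResp_unique hY' hG
      have hset : (X \ {e₁}) ∪ insert e₁ Y = X ∪ Y := by
        ext a
        by_cases h1 : a = e₁ <;> simp_all [Finset.mem_erase, herase]
      rw [hYe, hset]
end

section
/- Let E_f be a finite set with interval bounds d⁻, d⁺ : E_f → ℚ, d⁻(e) ≤ d⁺(e), with no one-point intersections (d⁻(e₁) ≠ d⁺(e₂) for all e₁, e₂), and let ≺ be the interval order defined by e₁ ≺ e₂ iff d⁺(e₁) < d⁻(e₂). Then for every choice function d with d(e) ∈ [d⁻(e), d⁺(e)] for all e, and every linear order ≤_d on E_f with e₁ ≤_d e₂ whenever d(e₁) < d(e₂), the order ≤_d is a linear extension of ≺. Conversely, every linear extension of ≺ arises in this way from some choice d ∈ ∏_e [d⁻(e), d⁺(e)]. -/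
/-- Interval uncertainty realizes exactly the linear extensions of the induced
interval order `e₁ ≺ e₂ ↔ d⁺ e₁ < d⁻ e₂` (no one-point intersections):
every linear order compatible with some choice `d ∈ ∏ [d⁻ e, d⁺ e]` extends
`≺`, and conversely every linear extension of `≺` is compatible with some such
choice `d`. -/
theorem interval_uncertainty_realizable_orders {α : Type*} [Finite α]
    (dminus dplus : α → ℚ)
    (hle : ∀ e, dminus e ≤ dplus e)
    (hne : ∀ e₁ e₂, dminus e₁ ≠ dplus e₂) :
    (∀ d : α → ℚ, (∀ e, dminus e ≤ d e ∧ d e ≤ dplus e) →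
      ∀ L : α → α → Prop, IsLinearOrder α L →
        (∀ e₁ e₂, d e₁ < d e₂ → L e₁ e₂) →
        ∀ e₁ e₂, dplus e₁ < dminus e₂ → L e₁ e₂ ∧ e₁ ≠ e₂) ∧
    (∀ L : α → α → Prop, IsLinearOrder α L →
      (∀ e₁ e₂, dplus e₁ < dminus e₂ → L e₁ e₂ ∧ e₁ ≠ e₂) →
      ∃ d : α → ℚ, (∀ e, dminus e ≤ d e ∧ d e ≤ dplus e) ∧
        ∀ e₁ e₂, d e₁ < d e₂ → L e₁ e₂) := by
  constructor
  · intro d hd L hL hcomp e₁ e₂ h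
    have h1 : d e₁ < d e₂ :=
      lt_of_le_of_lt (hd e₁).2 (lt_of_lt_of_le h (hd e₂).1)
    exact ⟨hcomp _ _ h1, fun heq => absurd (heq ▸ h1) (lt_irrefl _)⟩
  · intro L hL hext
    classical
    haveI := Fintype.ofFinite α
    haveI := hL
    have hrefl : ∀ a, L a a := fun a => refl_of L a
    have htrans : ∀ a b c, L a b → L b c → L a c := fun a b c => trans_of L
    have hanti : ∀ a b, L a b → L b a → a = b := fun a b => antisymm
    have htot : ∀ a b, L a b ∨ L b a := fun a b => total_of L a b
    have hmem : ∀ e : α, e ∈ Finset.univ.filter (fun e' => L e' e) := fun e =>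
      Finset.mem_filter.mpr ⟨Finset.mem_univ e, hrefl e⟩
    have hnemp : ∀ e : α, (Finset.univ.filter (fun e' => L e' e)).Nonempty :=
      fun e => ⟨e, hmem e⟩
    refine ⟨fun e => (Finset.univ.filter (fun e' => L e' e)).sup' (hnemp e) dminus,
      ?_, ?_⟩
    · intro e
      constructor
      · exact Finset.le_sup' dminus (hmem e)
      · apply Finset.sup'_le
        intro e' he'
        by_contra hc
        push_neg at hc
        obtain ⟨h1, h2⟩ := hext e e' hc
        exact h2 (hanti _ _ h1 (Finset.mem_filter.mp he').2)
    · intro e₁ e₂ h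
      rcases htot e₁ e₂ with h' | h'
      · exact h'
      · exfalso
        refine absurd ?_ (not_le.mpr h)
        apply Finset.sup'_le
        intro e' he'
        have hm : e' ∈ Finset.univ.filter (fun x => L x e₁) :=
          Finset.mem_filter.mpr ⟨Finset.mem_univ e',
            htrans e' e₂ e₁ (Finset.mem_filter.mp he').2 h'⟩
        exact Finset.le_sup' dminus hm
end

section
/- Let ≺ be the interval order on a finite set E induced by intervals [d⁻(e), d⁺(e)] with d⁻(e₁) ≠ d⁺(e₂) for all e₁, e₂. Then a subset S ⊆ E of cardinality k is a prefix of some linear extension of ≺ (i.e., S is a down-set/order ideal of ≺ with |S| = k) if and only if there exists ē ∈ E such that, setting E⁻ = {e : d⁺(e) < d⁻(ē)} and E⁰ = {e : d⁻(e) ≤ d⁻(ē) ≤ d⁺(e)}, we have E⁻ ⊆ S ⊆ E⁻ ∪ E⁰ and |E⁻| ≤ k ≤ |E⁻| + |E⁰|. -/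
/-- A `k`-element subset `S` of the finite ground set is a down-set (order
ideal, equivalently a prefix of some linear extension) of the interval order
`e' ≺ e ↔ d⁺ e' < d⁻ e` if and only if there is a reference item `ē` such
that, with `E⁻ = {e : d⁺ e < d⁻ ē}` and `E⁰ = {e : d⁻ e ≤ d⁻ ē ≤ d⁺ e}`,
we have `E⁻ ⊆ S ⊆ E⁻ ∪ E⁰` and `|E⁻| ≤ k ≤ |E⁻| + |E⁰|`. -/
theorem interval_order_downset_characterization {α : Type*} [Fintype α]
    [DecidableEq α] [Nonempty α]
    (dminus dplus : α → ℚ)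
    (hle : ∀ e, dminus e ≤ dplus e)
    (hne : ∀ e₁ e₂, dminus e₁ ≠ dplus e₂)
    (S : Finset α) (k : ℕ) (hk : S.card = k) :
    (∀ e ∈ S, ∀ e' : α, dplus e' < dminus e → e' ∈ S) ↔
    ∃ ebar : α,
      (Finset.univ.filter fun e => dplus e < dminus ebar) ⊆ S ∧
      S ⊆ (Finset.univ.filter fun e => dplus e < dminus ebar) ∪
          (Finset.univ.filter fun e => dminus e ≤ dminus ebar ∧ dminus ebar ≤ dplus e) ∧
      (Finset.univ.filter fun e => dplus e < dminus ebar).card ≤ k ∧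
      k ≤ (Finset.univ.filter fun e => dplus e < dminus ebar).card +
          (Finset.univ.filter fun e => dminus e ≤ dminus ebar ∧ dminus ebar ≤ dplus e).card := by
  constructor
  · intro hdown
    rcases S.eq_empty_or_nonempty with hS | hS
    · -- S empty: pick ebar minimizing dminus over all of α
      obtain ⟨ebar, -, hmin⟩ :=
        Finset.exists_min_image Finset.univ dminus ⟨Classical.arbitrary α, Finset.mem_univ _⟩
      refine ⟨ebar, ?_, ?_, ?_, ?_⟩
      · intro e he
        simp only [Finset.mem_filter] at he
        exact absurd he.2 (not_lt.mpr ((hmin e (Finset.mem_univ e)).trans (hle e)))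
      · simp [hS]
      · have : (Finset.univ.filter fun e => dplus e < dminus ebar) = ∅ := by
          ext e
          simp only [Finset.mem_filter, Finset.mem_univ, true_and, Finset.notMem_empty,
            iff_false]
          exact not_lt.mpr ((hmin e (Finset.mem_univ e)).trans (hle e))
        simp [this]
      · subst hS; simp at hk; omega
    · -- S nonempty: pick ebar ∈ S maximizing dminus
      obtain ⟨ebar, hebS, hmax⟩ := S.exists_max_image dminus hS
      have hsub : S ⊆ (Finset.univ.filter fun e => dplus e < dminus ebar) ∪
          (Finset.univ.filter fun e => dminus e ≤ dminus ebar ∧ dminus ebar ≤ dplus e) := by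
        intro e he
        simp only [Finset.mem_union, Finset.mem_filter, Finset.mem_univ, true_and]
        rcases lt_or_ge (dplus e) (dminus ebar) with h | h
        · exact Or.inl h
        · exact Or.inr ⟨hmax e he, h⟩
      have hsub' : (Finset.univ.filter fun e => dplus e < dminus ebar) ⊆ S := by
        intro e he
        simp only [Finset.mem_filter] at he
        exact hdown ebar hebS e he.2
      refine ⟨ebar, hsub', hsub, ?_, ?_⟩
      · rw [← hk]; exact Finset.card_le_card hsub'
      · calc k = S.card := hk.symm
          _ ≤ _ := Finset.card_le_card hsub
          _ ≤ _ := Finset.card_union_le _ _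
  · rintro ⟨ebar, hlo, hhi, -, -⟩
    intro e he e' hlt
    have := hhi he
    simp only [Finset.mem_union, Finset.mem_filter, Finset.mem_univ, true_and] at this
    apply hlo
    simp only [Finset.mem_filter, Finset.mem_univ, true_and]
    rcases this with h | ⟨h1, h2⟩
    · exact lt_trans hlt (lt_of_le_of_lt (hle e) h)
    · exact lt_of_lt_of_le hlt h1
end

section
/- Let U = ∏_{e∈E_f} U_e be a discrete uncorrelated uncertainty set with finite sets U_e ⊆ ℚ, and let conv(U) = ∏_{e∈E_f} [min U_e, max U_e]. For any fixed capacity k ∈ {0,…,|E_f|}, the family of sets of items that are optimal follower solutions (k cheapest items under some tie-breaking) realizable by scenarios in U equals the family realizable by scenarios in conv(U). In particular, for every d ∈ conv(U) and every k-element set S that is the set of k smallest items under d (with any tie-breaking), there exists d' ∈ U realizing the same set S. -/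
/-- For a discrete uncorrelated uncertainty set `U = ∏_e U_e` with finite
`U_e ⊆ ℚ` and its convex hull `conv(U) = ∏_e [min U_e, max U_e]`: for every
capacity `k`, the family of `k`-element item sets that are optimal follower
solutions under some scenario in `U` equals the family realizable under
scenarios in `conv(U)`; in particular, every optimal set under some
`d ∈ conv(U)` is also optimal under some `d' ∈ U`. -/
theorem discrete_uncorrelated_equiv_interval {α : Type*} [Fintype α]
    (𝒰 : α → Finset ℚ) (hU : ∀ e, (𝒰 e).Nonempty) (k : ℕ) :
    ({S : Finset α | ∃ d : α → ℚ, (∀ e, d e ∈ 𝒰 e) ∧ S.card = k ∧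
        ∀ e ∈ S, ∀ e' ∉ S, d e ≤ d e'} =
      {S : Finset α | ∃ d : α → ℚ,
        (∀ e, (𝒰 e).min' (hU e) ≤ d e ∧ d e ≤ (𝒰 e).max' (hU e)) ∧ S.card = k ∧
        ∀ e ∈ S, ∀ e' ∉ S, d e ≤ d e'}) ∧
    (∀ d : α → ℚ, (∀ e, (𝒰 e).min' (hU e) ≤ d e ∧ d e ≤ (𝒰 e).max' (hU e)) →
      ∀ S : Finset α, S.card = k → (∀ e ∈ S, ∀ e' ∉ S, d e ≤ d e') →
        ∃ d' : α → ℚ, (∀ e, d' e ∈ 𝒰 e) ∧ ∀ e ∈ S, ∀ e' ∉ S, d' e ≤ d' e') := by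

  classical
  have key : ∀ d : α → ℚ, (∀ e, (𝒰 e).min' (hU e) ≤ d e ∧ d e ≤ (𝒰 e).max' (hU e)) →
      ∀ S : Finset α, (∀ e ∈ S, ∀ e' ∉ S, d e ≤ d e') →
        ∃ d' : α → ℚ, (∀ e, d' e ∈ 𝒰 e) ∧ ∀ e ∈ S, ∀ e' ∉ S, d' e ≤ d' e' := by
    intro d hd S hS
    refine ⟨fun e => if e ∈ S then (𝒰 e).min' (hU e) else (𝒰 e).max' (hU e), ?_, ?_⟩
    · intro e
      by_cases h : e ∈ S <;> simp [h, Finset.min'_mem, Finset.max'_mem]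
    · intro e he e' he'
      simp only [he, he', if_pos, if_neg, if_true, if_false]
      calc (𝒰 e).min' (hU e) ≤ d e := (hd e).1
        _ ≤ d e' := hS e he e' he'
        _ ≤ (𝒰 e').max' (hU e') := (hd e').2
  constructor
  · ext S
    simp only [Set.mem_setOf_eq]
    constructor
    · rintro ⟨d, hd, hcard, hopt⟩
      exact ⟨d, fun e => ⟨Finset.min'_le _ _ (hd e), Finset.le_max' _ _ (hd e)⟩, hcard, hopt⟩
    · rintro ⟨d, hd, hcard, hopt⟩
      obtain ⟨d', hd', hopt'⟩ := key d hd S hopt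
      exact ⟨d', hd', hcard, hopt'⟩
  · intro d hd S _ hopt
    exact key d hd S hopt
end

section
/- Consider the Robust Bilevel Selection Problem with E_l ⊆ E_f, nonnegative leader costs c : E_f → ℚ≥0, capacity b, and a discrete uncertainty set U of follower cost scenarios. Let X* be an optimal leader's solution with worst-case follower response Y* and Y^d the follower's response to X* in scenario d. For b_l ∈ {|X*|,…,min(b,|E_l|)} minimal with |X_{b_l} ∩ Y^d| ≤ b_l − |X*| for all d ∈ U, where X_{b_l} is the set of b_l cheapest items of E_l under c, it holds that c(X_{b_l}) ≤ c(X*) + c(Y*). -/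
/-- Follower's greedy response under scenario `d`: the `b − |X|` smallest items
of `E_f \ X` with respect to `d` (scenarios are injective on `E_f`, so ties do
not occur and the response is unique). -/
def FollowerResp {α : Type*} [DecidableEq α] (Ef : Finset α) (b : ℕ) (d : α → ℚ)
    (X Y : Finset α) : Prop :=
  Y ⊆ Ef \ X ∧ Y.card = b - X.card ∧ ∀ e ∈ Y, ∀ e' ∈ (Ef \ X) \ Y, d e < d e'

/-- If `|S₁| = |S₂|` and every element of `S₁` is at most every element of `S₂`
(in cost), then the total cost of `S₁` is at most that of `S₂`. -/
private lemma sum_le_of_card_eq_of_forall {α : Type*} (S1 S2 : Finset α) (c : α → ℚ)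
    (hcard : S1.card = S2.card) (h : ∀ x ∈ S1, ∀ y ∈ S2, c x ≤ c y) :
    ∑ x ∈ S1, c x ≤ ∑ y ∈ S2, c y := by
  rcases S2.eq_empty_or_nonempty with h2 | h2
  · subst h2
    rw [Finset.card_empty, Finset.card_eq_zero] at hcard
    simp [hcard]
  · obtain ⟨y0, hy0, hy0min⟩ := S2.exists_min_image c h2
    calc ∑ x ∈ S1, c x ≤ S1.card • c y0 :=
          Finset.sum_le_card_nsmul _ _ _ (fun x hx => h x hx y0 hy0)
      _ = S2.card • c y0 := by rw [hcard]
      _ ≤ ∑ y ∈ S2, c y := Finset.card_nsmul_le_sum _ _ _ (fun y hy => hy0min y hy)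

/-- Exchange argument: if `|B| = |T|` and every element of `B \ T` is at most
every element of `T \ B` (in cost), then the total cost of `B` is at most that
of `T`. -/
private lemma sum_le_exchange {α : Type*} [DecidableEq α] (B T : Finset α) (c : α → ℚ)
    (hcard : B.card = T.card)
    (h : ∀ x ∈ B \ T, ∀ y ∈ T \ B, c x ≤ c y) :
    ∑ x ∈ B, c x ≤ ∑ y ∈ T, c y := by
  have h1 : (B ∩ T).card + (B \ T).card = B.card := Finset.card_inter_add_card_sdiff B T
  have h2 : (T ∩ B).card + (T \ B).card = T.card := Finset.card_inter_add_card_sdiff T B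
  have hcd : (B \ T).card = (T \ B).card := by
    rw [Finset.inter_comm] at h2; omega
  have hmain := sum_le_of_card_eq_of_forall (B \ T) (T \ B) c hcd h
  have e1 : ∑ x ∈ B ∩ T, c x + ∑ x ∈ B \ T, c x = ∑ x ∈ B, c x :=
    Finset.sum_inter_add_sum_sdiff B T c
  have e2 : ∑ x ∈ T ∩ B, c x + ∑ x ∈ T \ B, c x = ∑ x ∈ T, c x :=
    Finset.sum_inter_add_sum_sdiff T B c
  rw [Finset.inter_comm] at e2
  linarith

/-- First half of the 2-approximation analysis for the Robust Bilevel Selection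
Problem with `E_l ⊆ E_f` and nonnegative leader costs: for the minimal capacity
`b_l ≥ |X*|` with `|X_{b_l} ∩ Y^d| ≤ b_l − |X*|` for all scenarios `d ∈ U`,
the greedy leader prefix `X_{b_l}` satisfies `c(X_{b_l}) ≤ c(X*) + c(Y*)`,
where `X*` is an optimal leader's solution, `Y^d` its follower response in
scenario `d`, and `Y*` its worst-case follower response. -/
theorem robust_two_approx_first_half {α : Type*} [DecidableEq α]
    (El Ef : Finset α) (hsub : El ⊆ Ef)
    (b : ℕ) (hb : b ≤ Ef.card)
    (c : α → ℚ) (hc : ∀ e ∈ Ef, 0 ≤ c e)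
    (U : Finset (α → ℚ)) (hUne : U.Nonempty)
    (hUinj : ∀ d ∈ U, Set.InjOn d Ef)
    -- the leader's greedy prefixes, via a sorted enumeration of E_l
    (pl : ℕ → α)
    (hinj : Set.InjOn pl (Finset.Icc 1 El.card))
    (himg : (Finset.Icc 1 El.card).image pl = El)
    (hsort : ∀ i j : ℕ, 1 ≤ i → i ≤ j → j ≤ El.card → c (pl i) ≤ c (pl j))
    -- an optimal leader's solution X* with follower responses Y^d and worst case Y*
    (Xstar : Finset α) (hXstar : Xstar ⊆ El) (hXstarb : Xstar.card ≤ b)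
    (Yd : (α → ℚ) → Finset α)
    (hYd : ∀ d ∈ U, FollowerResp Ef b d Xstar (Yd d))
    (dstar : α → ℚ) (hdstar : dstar ∈ U)
    (hworst : ∀ d ∈ U, ∑ e ∈ Yd d, c e ≤ ∑ e ∈ Yd dstar, c e)
    -- the critical capacity b_l
    (bl : ℕ) (hbl_lo : Xstar.card ≤ bl) (hbl_hi : bl ≤ min b El.card)
    (hall : ∀ d ∈ U, (((Finset.Icc 1 bl).image pl) ∩ Yd d).card ≤ bl - Xstar.card)
    (hmin : ∀ m : ℕ, Xstar.card ≤ m → m ≤ min b El.card →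
      (∀ d ∈ U, (((Finset.Icc 1 m).image pl) ∩ Yd d).card ≤ m - Xstar.card) →
      bl ≤ m) :
    ∑ e ∈ (Finset.Icc 1 bl).image pl, c e ≤
      ∑ e ∈ Xstar, c e + ∑ e ∈ Yd dstar, c e := by
  set P : Finset α := (Finset.Icc 1 bl).image pl with hP
  have hblEl : bl ≤ El.card := le_trans hbl_hi (min_le_right _ _)
  have hsubIcc : Finset.Icc 1 bl ⊆ Finset.Icc 1 El.card :=
    Finset.Icc_subset_Icc_right hblEl
  have hPsub : P ⊆ El := by
    rw [hP, ← himg]; exact Finset.image_subset_image hsubIcc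
  have hPcard : P.card = bl := by
    rw [hP, Finset.card_image_of_injOn (hinj.mono (by exact_mod_cast hsubIcc))]
    simp
  -- every element of the prefix is at most every element of El outside the prefix
  have hcheap : ∀ e ∈ P, ∀ e' ∈ El, e' ∉ P → c e ≤ c e' := by
    intro e he e' he' hne'
    rw [hP, Finset.mem_image] at he
    obtain ⟨i, hi, rfl⟩ := he
    rw [← himg, Finset.mem_image] at he'
    obtain ⟨j, hj, rfl⟩ := he'
    rw [Finset.mem_Icc] at hi hj
    have hjm : ¬ j ≤ bl := by
      intro hjl
      exact hne' (Finset.mem_image.2 ⟨j, Finset.mem_Icc.2 ⟨hj.1, hjl⟩, rfl⟩)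
    exact hsort i j hi.1 (by omega) hj.2
  have hYdsub : ∀ d ∈ U, Yd d ⊆ Ef := fun d hd =>
    ((hYd d hd).1).trans (Finset.sdiff_subset)
  have hYdX : ∀ d ∈ U, ∀ e ∈ Yd d, e ∉ Xstar := by
    intro d hd e he
    exact (Finset.mem_sdiff.1 ((hYd d hd).1 he)).2
  rcases eq_or_lt_of_le hbl_lo with heq | hlt
  · -- Case bl = |X*| : prefix is cheaper than X* directly
    have h1 : ∑ e ∈ P, c e ≤ ∑ e ∈ Xstar, c e := by
      apply sum_le_exchange
      · rw [hPcard, heq]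
      · intro x hx y hy
        rw [Finset.mem_sdiff] at hx hy
        exact hcheap x hx.1 y (hXstar hy.1) hy.2
    have h2 : 0 ≤ ∑ e ∈ Yd dstar, c e :=
      Finset.sum_nonneg (fun e he => hc e (hYdsub dstar hdstar he))
    linarith
  · -- Case |X*| < bl : use minimality at bl - 1
    have hfail : ¬ ∀ d ∈ U,
        (((Finset.Icc 1 (bl - 1)).image pl) ∩ Yd d).card ≤ (bl - 1) - Xstar.card := by
      intro H
      have := hmin (bl - 1) (by omega) (by omega) H
      omega
    push_neg at hfail
    obtain ⟨d, hd, hcard'⟩ := hfail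
    set A : Finset α := P ∩ Yd d with hA
    set B : Finset α := P \ Yd d with hB
    have hA'sub : ((Finset.Icc 1 (bl - 1)).image pl) ∩ Yd d ⊆ A := by
      apply Finset.inter_subset_inter _ (subset_refl _)
      exact Finset.image_subset_image (Finset.Icc_subset_Icc_right (by omega))
    have hAle : A.card ≤ bl - Xstar.card := hall d hd
    have hAge : bl - Xstar.card ≤ A.card := by
      have := Finset.card_le_card hA'sub
      omega
    have hAcard : A.card = bl - Xstar.card := le_antisymm hAle hAge
    have hsplitc : A.card + B.card = P.card := Finset.card_inter_add_card_sdiff P (Yd d)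
    have hBcard : B.card = Xstar.card := by omega
    have hsplit : ∑ e ∈ A, c e + ∑ e ∈ B, c e = ∑ e ∈ P, c e :=
      Finset.sum_inter_add_sum_sdiff P (Yd d) c
    -- A ⊆ Y^d and costs are nonnegative
    have hAle2 : ∑ e ∈ A, c e ≤ ∑ e ∈ Yd d, c e := by
      apply Finset.sum_le_sum_of_subset_of_nonneg (Finset.inter_subset_right)
      intro e he _
      exact hc e (hYdsub d hd he)
    -- B is exchanged against X*
    have hBle : ∑ e ∈ B, c e ≤ ∑ e ∈ Xstar, c e := by
      apply sum_le_exchange B Xstar c hBcard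
      intro x hx y hy
      rw [Finset.mem_sdiff] at hx hy
      have hxP : x ∈ P := (Finset.sdiff_subset) hx.1
      have hyP : y ∉ P := by
        intro hyP
        have hyY : y ∉ Yd d := fun hyY => hYdX d hd y hyY hy.1
        exact hy.2 (Finset.mem_sdiff.2 ⟨hyP, hyY⟩)
      exact hcheap x hxP y (hXstar hy.1) hyP
    have hw := hworst d hd
    linarith
end

section
/- Consider the Robust Bilevel Selection Problem with E_l ⊆ E_f, nonnegative leader costs c : E_f → ℚ≥0, capacity b, and discrete uncertainty set U. With X*, Y*, Y^d, and the minimal capacity b_l as in the 2-approximation analysis (|X_{b_l} ∩ Y^d| ≤ b_l − |X*| for all d, and |X_{b_l−1} ∩ Y^d| ≥ b_l − |X*| for some d if b_l > |X*|), let Y_{b_l} be the worst-case follower response to the greedy leader prefix X_{b_l}. Then c(Y_{b_l}) ≤ c(X*) + c(Y*). -/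
/-- Second half of the 2-approximation analysis for the Robust Bilevel
Selection Problem with `E_l ⊆ E_f` and nonnegative leader costs: with the
critical capacity `b_l` (satisfying `|X_{b_l} ∩ Y^d| ≤ b_l − |X*|` for all
`d ∈ U`, and `|X_{b_l−1} ∩ Y^d| ≥ b_l − |X*|` for some `d` if `b_l > |X*|`),
the worst-case follower response `Y_{b_l}` to the greedy prefix `X_{b_l}`
satisfies `c(Y_{b_l}) ≤ c(X*) + c(Y*)`. -/
theorem robust_two_approx_second_half {α : Type*} [DecidableEq α]
    (El Ef : Finset α) (hsub : El ⊆ Ef)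
    (b : ℕ) (hb : b ≤ Ef.card)
    (c : α → ℚ) (hc : ∀ e ∈ Ef, 0 ≤ c e)
    (U : Finset (α → ℚ)) (hUne : U.Nonempty)
    (hUinj : ∀ d ∈ U, Set.InjOn d Ef)
    (pl : ℕ → α)
    (hinj : Set.InjOn pl (Finset.Icc 1 El.card))
    (himg : (Finset.Icc 1 El.card).image pl = El)
    (hsort : ∀ i j : ℕ, 1 ≤ i → i ≤ j → j ≤ El.card → c (pl i) ≤ c (pl j))
    (Xstar : Finset α) (hXstar : Xstar ⊆ El) (hXstarb : Xstar.card ≤ b)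
    (Yd : (α → ℚ) → Finset α)
    (hYd : ∀ d ∈ U, FollowerResp Ef b d Xstar (Yd d))
    (dstar : α → ℚ) (hdstar : dstar ∈ U)
    (hworst : ∀ d ∈ U, ∑ e ∈ Yd d, c e ≤ ∑ e ∈ Yd dstar, c e)
    (bl : ℕ) (hbl_lo : Xstar.card ≤ bl) (hbl_hi : bl ≤ min b El.card)
    (hall : ∀ d ∈ U, (((Finset.Icc 1 bl).image pl) ∩ Yd d).card ≤ bl - Xstar.card)
    (hmin : Xstar.card < bl →
      ∃ d ∈ U, bl - Xstar.card ≤ (((Finset.Icc 1 (bl - 1)).image pl) ∩ Yd d).card)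
    -- follower responses to the greedy prefix X_{b_l} and the worst-case one
    (Ybl : (α → ℚ) → Finset α)
    (hYbl : ∀ d ∈ U, FollowerResp Ef b d ((Finset.Icc 1 bl).image pl) (Ybl d))
    (dworst : α → ℚ) (hdworst : dworst ∈ U)
    (hworst2 : ∀ d ∈ U, ∑ e ∈ Ybl d, c e ≤ ∑ e ∈ Ybl dworst, c e) :
    ∑ e ∈ Ybl dworst, c e ≤ ∑ e ∈ Xstar, c e + ∑ e ∈ Yd dstar, c e := by
  classical
  set X : Finset α := (Finset.Icc 1 bl).image pl with hXdef
  have hblEl : bl ≤ El.card := le_trans hbl_hi (min_le_right _ _)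
  have hblb : bl ≤ b := le_trans hbl_hi (min_le_left _ _)
  have hXcard : X.card = bl := by
    rw [hXdef, Finset.card_image_of_injOn, Nat.card_Icc]
    · omega
    · intro i hi j hj hij
      refine hinj ?_ ?_ hij <;>
        simp only [Finset.coe_Icc, Set.mem_Icc, Finset.mem_Icc] at * <;> omega
  obtain ⟨hYsub, hYcard, hYmin⟩ := hYd dworst hdworst
  obtain ⟨hZsub, hZcard, hZmin⟩ := hYbl dworst hdworst
  have hsubset : Ybl dworst ⊆ Xstar ∪ Yd dworst := by
    intro e he
    by_contra hcon
    simp only [Finset.mem_union, not_or] at hcon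
    obtain ⟨heX, heY⟩ := hcon
    have heEf : e ∈ Ef \ X := hZsub he
    have heEf' : e ∈ Ef := (Finset.mem_sdiff.1 heEf).1
    have he2 : e ∈ (Ef \ Xstar) \ Yd dworst := by
      simp only [Finset.mem_sdiff]
      exact ⟨⟨heEf', heX⟩, heY⟩
    have hsub2 : Yd dworst \ X ⊆ Ybl dworst := by
      intro f hf
      obtain ⟨hfY, hfX⟩ := Finset.mem_sdiff.1 hf
      by_contra hfnot
      have h1 := hZmin e he f (by
        simp only [Finset.mem_sdiff]
        exact ⟨⟨(Finset.mem_sdiff.1 (hYsub hfY)).1, hfX⟩, hfnot⟩)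
      have h2 := hYmin f hfY e he2
      linarith
    have hins : insert e (Yd dworst \ X) ⊆ Ybl dworst := by
      intro x hx
      rcases Finset.mem_insert.1 hx with rfl | hx
      · exact he
      · exact hsub2 hx
    have hcard2 := Finset.card_le_card hins
    rw [Finset.card_insert_of_notMem (fun h => heY (Finset.mem_sdiff.1 h).1)] at hcard2
    have hsd := Finset.card_sdiff_add_card_inter (Yd dworst) X
    have hint := hall dworst hdworst
    rw [Finset.inter_comm] at hint
    omega
  have hYEf : ∀ x ∈ Xstar ∪ Yd dworst, x ∈ Ef := by
    intro x hx
    rcases Finset.mem_union.1 hx with hx | hx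
    · exact hsub (hXstar hx)
    · exact (Finset.mem_sdiff.1 (hYsub hx)).1
  have h1 : ∑ e ∈ Ybl dworst, c e ≤ ∑ e ∈ Xstar ∪ Yd dworst, c e :=
    Finset.sum_le_sum_of_subset_of_nonneg hsubset
      (fun x hx _ => hc x (hYEf x hx))
  have h2 : ∑ e ∈ Xstar ∪ Yd dworst, c e ≤ ∑ e ∈ Xstar, c e + ∑ e ∈ Yd dworst, c e := by
    have := Finset.sum_union_inter (s₁ := Xstar) (s₂ := Yd dworst) (f := c)
    have hnn : 0 ≤ ∑ e ∈ Xstar ∩ Yd dworst, c e :=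
      Finset.sum_nonneg fun x hx => hc x (hsub (hXstar (Finset.mem_inter.1 hx).1))
    linarith
  have h3 := hworst dworst hdworst
  linarith
end

section
/- Consider the Robust Bilevel Selection Problem with E_l ⊆ E_f, nonnegative leader costs c : E_f → ℚ≥0, and any discrete uncertainty set U. Let OPT = min_X max_{d∈U} c(X ∪ Y^d(X)) be the optimal robust leader's value. Then min over b_l ∈ {0,…,min(b,|E_l|)} of max_{d∈U} c(X_{b_l} ∪ Y^d(X_{b_l})) ≤ 2·OPT, where X_{b_l} is the greedy prefix of b_l cheapest leader items and Y^d(X) is the follower's greedy response to X under scenario d. -/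
open Finset

/-- Existence of a follower response. -/
lemma exists_followerResp {α : Type*} [DecidableEq α] (Ef : Finset α) (b : ℕ) (d : α → ℚ)
    (hd : Set.InjOn d Ef) (X : Finset α) (hX : X ⊆ Ef) (hb : b ≤ Ef.card) :
    ∃ Y, FollowerResp Ef b d X Y := by
  have hk : b - X.card ≤ (Ef \ X).card := by
    rw [card_sdiff_of_subset hX]; omega
  obtain ⟨Y0, hY0Z, hY0c⟩ := exists_subset_card_eq hk
  obtain ⟨Y, hYmem, hYmin⟩ := ((Ef \ X).powersetCard (b - X.card)).exists_min_image
    (fun Y => ∑ e ∈ Y, d e) ⟨Y0, mem_powersetCard.mpr ⟨hY0Z, hY0c⟩⟩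
  rw [mem_powersetCard] at hYmem
  refine ⟨Y, hYmem.1, hYmem.2, ?_⟩
  intro e he e' he'
  rw [mem_sdiff] at he'
  have heZ : e ∈ Ef \ X := hYmem.1 he
  have hne : e ≠ e' := fun h => he'.2 (h ▸ he)
  have he'Y : e' ∉ Y := he'.2
  have he'erase : e' ∉ Y.erase e := fun h => he'.2 (erase_subset _ _ h)
  have hY2 : insert e' (Y.erase e) ∈ (Ef \ X).powersetCard (b - X.card) := by
    rw [mem_powersetCard]
    constructor
    · intro x hx
      rcases mem_insert.mp hx with h | h
      · exact h ▸ he'.1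
      · exact hYmem.1 (erase_subset _ _ h)
    · rw [card_insert_of_notMem he'erase, card_erase_of_mem he, hYmem.2]
      have : 0 < Y.card := card_pos.mpr ⟨e, he⟩
      omega
  have hmin := hYmin _ hY2
  have hsum : ∑ x ∈ insert e' (Y.erase e), d x = d e' + (∑ x ∈ Y, d x - d e) := by
    rw [sum_insert he'erase]
    have := Finset.sum_erase_add Y d he
    linarith
  have hle : d e ≤ d e' := by
    simp only [hsum] at hmin; linarith
  have hdne : d e ≠ d e' := fun h =>
    hne (hd (mem_sdiff.mp heZ).1 (mem_sdiff.mp he'.1).1 h)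
  exact lt_of_le_of_ne hle hdne

/-- Sum over `Icc 1 n` as a shifted range sum. -/
lemma sum_Icc_one (g : ℕ → ℚ) (n : ℕ) :
    ∑ i ∈ Icc 1 n, g i = ∑ i ∈ range n, g (i + 1) := by
  induction n with
  | zero => simp
  | succ n ih =>
      rw [Finset.sum_Icc_succ_top (by omega : 1 ≤ n + 1), ih, Finset.sum_range_succ]

/-- The greedy prefix of size `|T|` is at most as expensive as any `T ⊆ El`. -/
lemma prefix_cheapest {α : Type*} [DecidableEq α] (El : Finset α) (c : α → ℚ) (pl : ℕ → α)
    (hinj : Set.InjOn pl (Finset.Icc 1 El.card))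
    (himg : (Finset.Icc 1 El.card).image pl = El)
    (hsort : ∀ i j : ℕ, 1 ≤ i → i ≤ j → j ≤ El.card → c (pl i) ≤ c (pl j))
    (T : Finset α) (hT : T ⊆ El) :
    ∑ e ∈ (Finset.Icc 1 T.card).image pl, c e ≤ ∑ e ∈ T, c e := by
  set N := El.card with hN
  set I : Finset ℕ := (Icc 1 N).filter (fun i => pl i ∈ T) with hIdef
  have hIsub : I ⊆ Icc 1 N := filter_subset _ _
  have hIT : I.image pl = T := by
    apply Finset.Subset.antisymm
    · intro x hx
      obtain ⟨i, hi, rfl⟩ := mem_image.mp hx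
      exact (mem_filter.mp hi).2
    · intro t ht
      have : t ∈ (Icc 1 N).image pl := himg ▸ hT ht
      obtain ⟨i, hi, rfl⟩ := mem_image.mp this
      exact mem_image.mpr ⟨i, mem_filter.mpr ⟨hi, ht⟩, rfl⟩
  have hIcard : I.card = T.card := by
    rw [← hIT, card_image_of_injOn (hinj.mono (by exact_mod_cast hIsub))]
  set n := T.card with hn
  have hnN : n ≤ N := card_le_card hT
  have hsumT : ∑ e ∈ T, c e = ∑ i ∈ I, c (pl i) := by
    rw [← hIT]
    exact Finset.sum_image (fun x hx y hy h => hinj (hIsub hx) (hIsub hy) h)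
  have hsumP : ∑ e ∈ (Icc 1 n).image pl, c e = ∑ i ∈ Icc 1 n, c (pl i) := by
    refine Finset.sum_image (fun x hx y hy h => ?_)
    have hx' : x ∈ Icc 1 N := Icc_subset_Icc_right hnN hx
    have hy' : y ∈ Icc 1 N := Icc_subset_Icc_right hnN hy
    exact hinj hx' hy' h
  rw [hsumT, hsumP]
  -- order embedding of I
  have hIcard' : I.card = n := hIcard
  set e := I.orderEmbOfFin hIcard' with he
  have hmemI : ∀ k : Fin n, e k ∈ I := fun k => I.orderEmbOfFin_mem hIcard' k
  have hek_lb' : ∀ i : ℕ, ∀ h : i < n, i + 1 ≤ e ⟨i, h⟩ := by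
    intro i
    induction i with
    | zero => exact fun h => (mem_Icc.mp (hIsub (hmemI ⟨0, h⟩))).1
    | succ i ih =>
        intro h
        have hi : i < n := by omega
        have hlt : e ⟨i, hi⟩ < e ⟨i + 1, h⟩ := e.strictMono (by simp [Fin.lt_def])
        have := ih hi
        omega
  have hek_lb : ∀ k : Fin n, (k : ℕ) + 1 ≤ e k := by
    intro k
    have := hek_lb' k.val k.isLt
    simpa [Fin.eta] using this
  have hek_ub : ∀ k : Fin n, e k ≤ N := fun k => (mem_Icc.mp (hIsub (hmemI k))).2
  have hIimage : (univ : Finset (Fin n)).image (fun k => e k) = I := by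
    apply Finset.coe_injective
    rw [coe_image, coe_univ, Set.image_univ]
    exact I.range_orderEmbOfFin hIcard'
  have hsumI : ∑ i ∈ I, c (pl i) = ∑ k : Fin n, c (pl (e k)) := by
    rw [← hIimage]
    exact Finset.sum_image (fun x _ y _ h => e.injective h)
  rw [hsumI, sum_Icc_one (fun i => c (pl i)) n, Finset.sum_range]
  apply Finset.sum_le_sum
  intro k _
  exact hsort (k + 1) (e k) (by omega) (hek_lb k) (hek_ub k)

/-- 2-approximation guarantee of the greedy-prefix enumeration algorithm for
the Robust Bilevel Selection Problem with `E_l ⊆ E_f` and nonnegative leader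
costs: for every feasible leader's solution `X'` there is a capacity
`b_l ≤ min(b, |E_l|)` such that the worst-case value of the greedy prefix
`X_{b_l}` is at most twice the worst-case value of `X'`; in particular the
value of the best greedy prefix is at most `2·OPT`. -/
theorem robust_two_approx {α : Type*} [DecidableEq α]
    (El Ef : Finset α) (hsub : El ⊆ Ef)
    (b : ℕ) (hb : b ≤ Ef.card)
    (c : α → ℚ) (hc : ∀ e ∈ Ef, 0 ≤ c e)
    (U : Finset (α → ℚ)) (hUne : U.Nonempty)
    (hUinj : ∀ d ∈ U, Set.InjOn d Ef)
    (pl : ℕ → α)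
    (hinj : Set.InjOn pl (Finset.Icc 1 El.card))
    (himg : (Finset.Icc 1 El.card).image pl = El)
    (hsort : ∀ i j : ℕ, 1 ≤ i → i ≤ j → j ≤ El.card → c (pl i) ≤ c (pl j)) :
    ∀ X' : Finset α, X' ⊆ El → X'.card ≤ b →
      ∃ bl : ℕ, bl ≤ min b El.card ∧
        ∀ d ∈ U, ∀ Y : Finset α,
          FollowerResp Ef b d ((Finset.Icc 1 bl).image pl) Y →
          ∃ d' ∈ U, ∃ Y' : Finset α, FollowerResp Ef b d' X' Y' ∧
            ∑ e ∈ (Finset.Icc 1 bl).image pl ∪ Y, c e ≤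
              2 * ∑ e ∈ X' ∪ Y', c e := by
  intro X' hX'El hX'b
  classical
  have hX'Ef : X' ⊆ Ef := hX'El.trans hsub
  -- chosen follower responses to X'
  set R : (α → ℚ) → Finset α := fun d =>
    if h : ∃ Y, FollowerResp Ef b d X' Y then h.choose else ∅ with hR
  have hRresp : ∀ d ∈ U, FollowerResp Ef b d X' (R d) := by
    intro d hd
    have h : ∃ Y, FollowerResp Ef b d X' Y :=
      exists_followerResp Ef b d (hUinj d hd) X' hX'Ef hb
    simp only [hR, dif_pos h]
    exact h.choose_spec
  -- worst scenario w.r.t. leader items taken by the follower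
  obtain ⟨dh, hdhU, hdhmax⟩ := U.exists_max_image (fun d => (R d ∩ El).card) hUne
  set m := (R dh ∩ El).card with hm
  set k := X'.card with hk
  have hRdh := hRresp dh hdhU
  have hRdh_sub : R dh ⊆ Ef \ X' := hRdh.1
  have hRdh_card : (R dh).card = b - k := hRdh.2.1
  have hmle : m ≤ b - k := by
    rw [hm, ← hRdh_card]
    exact card_le_card inter_subset_left
  set bl := k + m with hbl
  have hblb : bl ≤ b := by omega
  -- the comparison set T
  set T : Finset α := X' ∪ (R dh ∩ El) with hT
  have hTsub : T ⊆ El := union_subset hX'El inter_subset_right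
  have hTdisj : Disjoint X' (R dh ∩ El) := by
    apply Finset.disjoint_left.mpr
    intro a ha ha2
    exact (mem_sdiff.mp (hRdh_sub (mem_of_mem_inter_left ha2))).2 ha
  have hTcard : T.card = bl := by
    rw [hT, card_union_of_disjoint hTdisj, hbl, hk, hm]
  have hblEl : bl ≤ El.card := hTcard ▸ card_le_card hTsub
  refine ⟨bl, le_min hblb hblEl, ?_⟩
  set Xg : Finset α := (Finset.Icc 1 bl).image pl with hXg
  have hXgEl : Xg ⊆ El := by
    rw [hXg, ← himg]
    exact image_subset_image (Icc_subset_Icc_right hblEl)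
  have hXgcard : Xg.card = bl := by
    rw [hXg, card_image_of_injOn
      (hinj.mono (by exact_mod_cast Icc_subset_Icc_right hblEl)), Nat.card_Icc]
    omega
  -- greedy prefix is cheapest bl-subset of El
  have hXgcheap : ∑ e ∈ Xg, c e ≤ ∑ e ∈ T, c e := by
    have h := prefix_cheapest El c pl hinj himg hsort T hTsub
    rw [hTcard] at h
    exact h
  have hBhEf : X' ∪ R dh ⊆ Ef := union_subset hX'Ef (hRdh_sub.trans sdiff_subset)
  have hTB : ∑ e ∈ T, c e ≤ ∑ e ∈ X' ∪ R dh, c e := by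
    apply sum_le_sum_of_subset_of_nonneg
    · exact union_subset subset_union_left (inter_subset_left.trans subset_union_right)
    · exact fun i hi _ => hc i (hBhEf hi)
  intro d hd Y hYresp
  have hRd := hRresp d hd
  have hYsub : Y ⊆ Ef \ Xg := hYresp.1
  have hYcard : Y.card = b - bl := by rw [hYresp.2.1, hXgcard]
  have hRdcard : (R d).card = b - k := hRd.2.1
  -- key structural claim: Y is contained in X' ∪ R d
  have h1 : Y ⊆ X' ∪ R d := by
    by_contra hnot
    obtain ⟨e, heY, heB⟩ := not_subset.mp hnot
    have heEf : e ∈ Ef := (mem_sdiff.mp (hYsub heY)).1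
    have heX' : e ∉ X' := fun h => heB (mem_union_left _ h)
    have heRd : e ∉ R d := fun h => heB (mem_union_right _ h)
    have hA : R d \ Xg ⊆ Y := by
      intro y hy
      rw [mem_sdiff] at hy
      by_contra hyY
      have hyEf : y ∈ Ef := (mem_sdiff.mp (hRd.1 hy.1)).1
      have hlt1 : d e < d y := hYresp.2.2 e heY y
        (by rw [mem_sdiff, mem_sdiff]; exact ⟨⟨hyEf, hy.2⟩, hyY⟩)
      have hlt2 : d y < d e := hRd.2.2 y hy.1 e
        (by rw [mem_sdiff, mem_sdiff]; exact ⟨⟨heEf, heX'⟩, heRd⟩)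
      linarith
    have hint : (R d ∩ Xg).card ≤ m := by
      calc (R d ∩ Xg).card ≤ (R d ∩ El).card :=
            card_le_card (inter_subset_inter (subset_refl _) hXgEl)
        _ ≤ m := hdhmax d hd
    have hsumcard := Finset.card_sdiff_add_card_inter (R d) Xg
    have hkb : k ≤ b := hX'b
    have hcardA : Y.card ≤ (R d \ Xg).card := by
      rw [hYcard]; omega
    have heq : R d \ Xg = Y := Finset.eq_of_subset_of_card_le hA hcardA
    rw [← heq] at heY
    exact heRd (mem_sdiff.mp heY).1
  have hdisj : Disjoint Xg Y := by
    rw [Finset.disjoint_left]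
    intro a haXg haY
    exact (mem_sdiff.mp (hYsub haY)).2 haXg
  have hsplit : ∑ e ∈ Xg ∪ Y, c e = ∑ e ∈ Xg, c e + ∑ e ∈ Y, c e := sum_union hdisj
  have hBdEf : X' ∪ R d ⊆ Ef := union_subset hX'Ef (hRd.1.trans sdiff_subset)
  have hY_le : ∑ e ∈ Y, c e ≤ ∑ e ∈ X' ∪ R d, c e :=
    sum_le_sum_of_subset_of_nonneg h1 (fun i hi _ => hc i (hBdEf hi))
  have hXg_le : ∑ e ∈ Xg, c e ≤ ∑ e ∈ X' ∪ R dh, c e := le_trans hXgcheap hTB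
  by_cases hcmp : ∑ e ∈ X' ∪ R d, c e ≤ ∑ e ∈ X' ∪ R dh, c e
  · exact ⟨dh, hdhU, R dh, hRdh, by rw [hsplit]; linarith⟩
  · exact ⟨d, hd, R d, hRd, by rw [hsplit]; linarith⟩
end

section
/- In a bilevel problem where the leader chooses x ∈ [0,1]^{E_l} (continuous) and the follower chooses a binary y ∈ {0,1}^{E_f} minimizing ∑_e d(e)y_e subject to x_e + y_e ≤ 1 for e ∈ E_l ∩ E_f and ∑_{e∈E_l} x_e + ∑_{e∈E_f} y_e = b, the leader's optimal value may not be attained: for E_l = {e₁,e₂}, E_f = {e₁,e₂,e₃}, b = 2, c(e₁) = 1, c(e₂) = c(e₃) = 0, d(e₁) = 0, d(e₂) = d(e₃) = 1, the infimum of the leader's objective ∑_{e∈E_l} c(e)x_e + ∑_{e∈E_f} c(e)y_e over feasible leader's solutions (with the follower's unique optimal response) equals 0, but every feasible leader's solution yields a strictly positive objective value. -/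
/-- Follower feasibility in the mixed continuous/binary bilevel instance:
binary `y`, residual availability `x_e + y_e ≤ 1` on the common items
`e₁, e₂`, and total capacity `b = 2`. -/
def FolFeas15 (x0 x1 y0 y1 y2 : ℚ) : Prop :=
  (y0 = 0 ∨ y0 = 1) ∧ (y1 = 0 ∨ y1 = 1) ∧ (y2 = 0 ∨ y2 = 1) ∧
  x0 + y0 ≤ 1 ∧ x1 + y1 ≤ 1 ∧ x0 + x1 + y0 + y1 + y2 = 2

/-- Follower optimality: `y` minimizes the follower cost `d·y = y₁ + y₂`
(with `d(e₁) = 0`, `d(e₂) = d(e₃) = 1`) among feasible responses. -/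
def FolOpt15 (x0 x1 y0 y1 y2 : ℚ) : Prop :=
  FolFeas15 x0 x1 y0 y1 y2 ∧
  ∀ y0' y1' y2' : ℚ, FolFeas15 x0 x1 y0' y1' y2' → y1 + y2 ≤ y1' + y2'

/-- Bilevel problem with continuous leader variables and binary follower
variables whose optimal value is not attained: in the instance
`E_l = {e₁, e₂}`, `E_f = {e₁, e₂, e₃}`, `b = 2`, `c = (1,0,0)`,
`d = (0,1,1)`, every feasible leader's solution (with follower-optimal
response) yields a strictly positive leader objective `x₀ + y₀`, yet the
objective can be made smaller than any `δ > 0`; hence the infimum `0` is not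
attained. -/
theorem bilevel_value_not_attained :
    (∀ x0 x1 y0 y1 y2 : ℚ,
      0 ≤ x0 → x0 ≤ 1 → 0 ≤ x1 → x1 ≤ 1 →
      FolOpt15 x0 x1 y0 y1 y2 → 0 < x0 + y0) ∧
    (∀ δ : ℚ, 0 < δ →
      ∃ x0 x1 y0 y1 y2 : ℚ,
        0 ≤ x0 ∧ x0 ≤ 1 ∧ 0 ≤ x1 ∧ x1 ≤ 1 ∧
        FolOpt15 x0 x1 y0 y1 y2 ∧ x0 + y0 < δ) := by
  constructor
  · intro x0 x1 y0 y1 y2 hx0 hx0' hx1 hx1' ⟨⟨h0, h1, h2, ha, hb, hc⟩, hopt⟩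
    by_contra hle
    push_neg at hle
    have hx00 : x0 = 0 := le_antisymm (by rcases h0 with h | h <;> linarith) hx0
    have hy00 : y0 = 0 := by rcases h0 with h | h <;> [exact h; linarith]
    rcases h1 with h1 | h1 <;> rcases h2 with h2 | h2
    · linarith
    · have := hopt 1 0 0 ⟨Or.inr rfl, Or.inl rfl, Or.inl rfl, by linarith,
        by linarith, by linarith⟩
      linarith
    · have := hopt 1 0 0 ⟨Or.inr rfl, Or.inl rfl, Or.inl rfl, by linarith,
        by linarith, by linarith⟩
      linarith
    · have := hopt 1 1 0 ⟨Or.inr rfl, Or.inr rfl, Or.inl rfl, by linarith,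
        by linarith, by linarith⟩
      linarith
  · intro δ hδ
    set ε : ℚ := min δ 1 / 2 with hε
    have hε0 : 0 < ε := by
      have : (0:ℚ) < min δ 1 := lt_min hδ one_pos
      positivity
    have hε1 : ε < 1 := by
      have : min δ 1 ≤ 1 := min_le_right _ _
      linarith
    have hεδ : ε < δ := by
      have : min δ 1 ≤ δ := min_le_left _ _
      linarith
    refine ⟨ε, 1 - ε, 0, 0, 1, le_of_lt hε0, le_of_lt hε1, by linarith, by linarith,
      ⟨⟨Or.inl rfl, Or.inl rfl, Or.inr rfl, by linarith, by linarith, by linarith⟩, ?_⟩,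
      by linarith⟩
    rintro y0' y1' y2' ⟨h0, h1, h2, ha, hb, hc⟩
    have hy0 : y0' = 0 := by rcases h0 with h | h <;> [exact h; linarith]
    have hy1 : y1' = 0 := by rcases h1 with h | h <;> [exact h; linarith]
    rcases h2 with h2 | h2 <;> linarith
end

section
/- Consider the Robust Continuous Bilevel Selection Problem with discrete uncertainty: disjoint sets E_l, E_f, total capacity b; the leader chooses b_l ∈ [max(0,b−|E_f|), min(b,|E_l|)] and selects fractionally optimal leader items of total amount b_l; then the adversary picks a scenario d ∈ U and the follower fills capacity b − b_l greedily by d. The leader's objective as a function of b_l equals g_l(b_l) + max_{d∈U} g_f^d(b_l), where g_l is the convex piecewise linear optimal continuous selection value of E_l at capacity b_l, and each g_f^d is a continuous piecewise linear function with integer breakpoints. The instance E_l = {e₁,e₂,e₃}, E_f = {e₄,e₅,e₆}, b = 3, c(e₁)=c(e₂)=c(e₃)=0, c(e₄)=−1, c(e₅)=1, c(e₆)=0, with two scenarios inducing follower greedy orders e₄,e₅,e₆ and e₆,e₄,e₅, has optimal leader value −1/2 attained at b_l = 3/2, while every integer choice b_l ∈ {0,1,2,3} yields worst-case value 0. Hence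 the continuous robust problem is not equivalent to its binary version. -/
/-- Feasible fractional follower solutions filling capacity `bf` from the
three follower items. -/
def FolFeas17 (bf : ℚ) (y : Fin 3 → ℚ) : Prop :=
  (∀ i, 0 ≤ y i ∧ y i ≤ 1) ∧ (y 0 + y 1 + y 2 = bf)

/-- Follower optimality: `y` minimizes the follower cost `∑ d i · y i` among
feasible fractional solutions of capacity `bf`. -/
def FolOpt17 (d : Fin 3 → ℚ) (bf : ℚ) (y : Fin 3 → ℚ) : Prop :=
  FolFeas17 bf y ∧ ∀ y' : Fin 3 → ℚ, FolFeas17 bf y' →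
    d 0 * y 0 + d 1 * y 1 + d 2 * y 2 ≤ d 0 * y' 0 + d 1 * y' 1 + d 2 * y' 2

/-- The continuous piecewise linear (integer breakpoints) follower
contribution to the leader's objective in scenario 1 (greedy order
`e₄, e₅, e₆`), as a function of the leader's capacity `b_l = t`. -/
noncomputable def pwl171 (t : ℚ) : ℚ := if t ≤ 1 then 0 else if t ≤ 2 then 1 - t else t - 3

/-- The follower contribution in scenario 2 (greedy order `e₆, e₄, e₅`). -/
noncomputable def pwl172 (t : ℚ) : ℚ := if t ≤ 1 then -t else if t ≤ 2 then t - 2 else 0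

lemma feas_vec (a b c bf : ℚ) (h0 : 0 ≤ a) (h1 : a ≤ 1) (h2 : 0 ≤ b) (h3 : b ≤ 1)
    (h4 : 0 ≤ c) (h5 : c ≤ 1) (hs : a + b + c = bf) : FolFeas17 bf ![a, b, c] := by
  refine ⟨fun i => ?_, by simpa using hs⟩
  fin_cases i <;> simp_all

lemma val1 (t : ℚ) (ht0 : 0 ≤ t) (ht3 : t ≤ 3) (y : Fin 3 → ℚ)
    (h : FolOpt17 ![(1 : ℚ), 2, 3] (3 - t) y) :
    (-1) * y 0 + 1 * y 1 + 0 * y 2 = pwl171 t := by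
  obtain ⟨⟨hb, hs⟩, hopt⟩ := h
  obtain ⟨h00, h01⟩ := hb 0
  obtain ⟨h10, h11⟩ := hb 1
  obtain ⟨h20, h21⟩ := hb 2
  unfold pwl171
  split_ifs with h1 h2
  · -- t ≤ 1, bf ≥ 2, greedy (1,1,bf-2)
    have := hopt ![1, 1, 1 - t] (feas_vec _ _ _ _ (by norm_num) le_rfl (by norm_num) le_rfl
      (by linarith) (by linarith) (by ring))
    simp [Matrix.cons_val_zero, Matrix.cons_val_one] at this
    linarith
  · -- 1 < t ≤ 2, bf ∈ [1,2], greedy (1, bf-1, 0)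
    have := hopt ![1, 2 - t, 0] (feas_vec _ _ _ _ (by norm_num) le_rfl
      (by linarith) (by linarith) le_rfl (by norm_num) (by ring))
    simp at this
    linarith
  · -- t > 2, bf < 1, greedy (bf,0,0)
    have := hopt ![3 - t, 0, 0] (feas_vec _ _ _ _ (by linarith) (by linarith)
      le_rfl (by norm_num) le_rfl (by norm_num) (by ring))
    simp at this
    linarith

lemma val2 (t : ℚ) (ht0 : 0 ≤ t) (ht3 : t ≤ 3) (y : Fin 3 → ℚ)
    (h : FolOpt17 ![(2 : ℚ), 3, 1] (3 - t) y) :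
    (-1) * y 0 + 1 * y 1 + 0 * y 2 = pwl172 t := by
  obtain ⟨⟨hb, hs⟩, hopt⟩ := h
  obtain ⟨h00, h01⟩ := hb 0
  obtain ⟨h10, h11⟩ := hb 1
  obtain ⟨h20, h21⟩ := hb 2
  unfold pwl172
  split_ifs with h1 h2
  · -- t ≤ 1, bf ≥ 2, greedy (1, bf-2, 1): cost 2 + 3(bf-2) + 1
    have := hopt ![1, 1 - t, 1] (feas_vec _ _ _ _ (by norm_num) le_rfl
      (by linarith) (by linarith) (by norm_num) le_rfl (by ring))
    simp at this
    -- 2 y0 + 3 y1 + y2 ≤ 2 + 3(1-t) + 1; sum = 3-t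
    linarith
  · -- 1 < t ≤ 2, bf ∈ [1,2], greedy (bf-1, 0, 1)
    have := hopt ![2 - t, 0, 1] (feas_vec _ _ _ _ (by linarith) (by linarith)
      le_rfl (by norm_num) (by norm_num) le_rfl (by ring))
    simp at this
    linarith
  · -- t > 2, bf < 1, greedy (0, 0, bf)
    have := hopt ![0, 0, 3 - t] (feas_vec _ _ _ _ le_rfl (by norm_num)
      le_rfl (by norm_num) (by linarith) (by linarith) (by ring))
    simp at this
    -- 2 y0 + 3 y1 + y2 ≤ 3 - t = y0+y1+y2 ⇒ y0 = y1 = 0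
    linarith

/-- Robust Continuous Bilevel Selection with discrete uncertainty: in the
instance `E_l = {e₁,e₂,e₃}` (all of leader cost `0`, so `g_l ≡ 0`),
`E_f = {e₄,e₅,e₆}` with leader costs `(−1,1,0)`, `b = 3`, and two scenarios
with follower costs `d₁ = (1,2,3)` and `d₂ = (2,3,1)` (inducing greedy orders
`e₄,e₅,e₆` and `e₆,e₄,e₅`), the leader's worst-case objective as a function of
her capacity `b_l = t` equals `max (pwl171 t) (pwl172 t)`, a pointwise maximum
of continuous piecewise linear functions with integer breakpoints; its optimal
value `−1/2` is attained at `b_l = 3/2`, while every integer choice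
`b_l ∈ {0,1,2,3}` yields worst-case value `0`. Hence the continuous robust
problem is not equivalent to its binary version. -/
theorem robust_continuous_not_equiv_binary :
    (∀ t : ℚ, t ∈ Set.Icc (0 : ℚ) 3 →
      ∀ y₁ y₂ : Fin 3 → ℚ,
        FolOpt17 ![(1 : ℚ), 2, 3] (3 - t) y₁ →
        FolOpt17 ![(2 : ℚ), 3, 1] (3 - t) y₂ →
        max ((-1) * y₁ 0 + 1 * y₁ 1 + 0 * y₁ 2)
            ((-1) * y₂ 0 + 1 * y₂ 1 + 0 * y₂ 2) = max (pwl171 t) (pwl172 t)) ∧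
    max (pwl171 (3 / 2)) (pwl172 (3 / 2)) = -(1 / 2) ∧
    (∀ t : ℚ, t ∈ Set.Icc (0 : ℚ) 3 → -(1 / 2) ≤ max (pwl171 t) (pwl172 t)) ∧
    (∀ t : ℚ, t ∈ ({0, 1, 2, 3} : Set ℚ) → max (pwl171 t) (pwl172 t) = 0) := by
  refine ⟨?_, ?_, ?_, ?_⟩
  · rintro t ⟨ht0, ht3⟩ y₁ y₂ h₁ h₂
    rw [val1 t ht0 ht3 y₁ h₁, val2 t ht0 ht3 y₂ h₂]
  · norm_num [pwl171, pwl172]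
  · rintro t ⟨ht0, ht3⟩
    rw [le_max_iff]
    unfold pwl171 pwl172
    split_ifs with h1 h2
    · left; norm_num
    · rcases le_total t (3/2) with h | h
      · left; linarith
      · right; linarith
    · right; norm_num
  · rintro t (rfl | rfl | rfl | rfl) <;> norm_num [pwl171, pwl172]
end

section
/- In the Robust Bilevel Selection Problem with discrete uncertainty set U, if the leader chooses a feasible solution X ⊆ E_l with |X| ≤ b, then the adversary's worst case can be computed by enumeration: max_{d∈U} c(X ∪ Y^d(X)) where Y^d(X) is the set of the b − |X| smallest items of E_f \ X with respect to d (fixed tie-breaking). Formally, for every X the maximum over the finite set U is attained, and the value of the robust leader's problem equals min over feasible X of this finite maximum; in particular, with E_l ∩ E_f = ∅, this min–max equals min over b_l ∈ {max(0,b−|E_f|),…,min(b,|E_l|)} of [g_l(b_l) + max_{d∈U} h_d(b − b_l)], where g_l(k) is the sum of the k smallest c-values in E_l and h_d(m) is the sum of leader costs c of the m smallest items of E_f under d. -/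
open Finset

theorem sum_Icc_card_le_sum_of_subset {M : Type*} [AddCommMonoid M] [PartialOrder M]
    [IsOrderedAddMonoid M] {f : ℕ → M} {n : ℕ} (hf : MonotoneOn f (Set.Icc 1 n))
    {S : Finset ℕ} (hS : S ⊆ Icc 1 n) :
    ∑ i ∈ Icc 1 S.card, f i ≤ ∑ i ∈ S, f i := by
  induction S using Finset.induction_on_max with
  | empty => simp
  | insert a S hlt ih =>
    have haS : a ∉ S := fun ha => lt_irrefl a (hlt a ha)
    have hsub : insert a S ⊆ Icc 1 a := fun x hx => by
      rcases mem_insert.mp hx with rfl | hx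
      · exact mem_Icc.mpr ⟨(mem_Icc.mp (hS (mem_insert_self x S))).1, le_rfl⟩
      · exact mem_Icc.mpr ⟨(mem_Icc.mp (hS (mem_insert_of_mem hx))).1, (hlt x hx).le⟩
    have hcard : S.card + 1 ≤ a := by
      simpa [card_insert_of_notMem haS] using card_le_card hsub
    have ha : a ≤ n := (mem_Icc.mp (hS (mem_insert_self a S))).2
    rw [card_insert_of_notMem haS, sum_Icc_succ_top (by omega), sum_insert haS, add_comm (f a)]
    exact add_le_add (ih ((subset_insert a S).trans hS))
      (hf ⟨by omega, by omega⟩ ⟨by omega, ha⟩ hcard)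

section Enumeration

variable {α : Type*} [DecidableEq α] {s : Finset α} {p : ℕ → α}

theorem image_Icc_subset_of_le (himg : (Icc 1 s.card).image p = s) {k : ℕ} (hk : k ≤ s.card) :
    (Icc 1 k).image p ⊆ s :=
  himg ▸ image_subset_image (Icc_subset_Icc_right hk)

theorem card_image_Icc_of_le (hinj : Set.InjOn p (Icc 1 s.card)) {k : ℕ} (hk : k ≤ s.card) :
    ((Icc 1 k).image p).card = k := by
  rw [card_image_of_injOn (hinj.mono (coe_subset.mpr (Icc_subset_Icc_right hk))), Nat.card_Icc,
    Nat.add_sub_cancel]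

theorem sum_image_Icc_of_le {M : Type*} [AddCommMonoid M] (hinj : Set.InjOn p (Icc 1 s.card))
    {k : ℕ} (hk : k ≤ s.card) (f : α → M) :
    ∑ e ∈ (Icc 1 k).image p, f e = ∑ i ∈ Icc 1 k, f (p i) :=
  sum_image fun _ hi _ hj h => hinj (Icc_subset_Icc_right hk hi) (Icc_subset_Icc_right hk hj) h

theorem sum_Icc_card_le_sum_of_subset_of_monotoneOn {M : Type*} [AddCommMonoid M]
    [PartialOrder M] [IsOrderedAddMonoid M] (hinj : Set.InjOn p (Icc 1 s.card))
    (himg : (Icc 1 s.card).image p = s) {c : α → M}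
    (hc : MonotoneOn (fun i => c (p i)) (Set.Icc 1 s.card)) {X : Finset α} (hX : X ⊆ s) :
    ∑ i ∈ Icc 1 X.card, c (p i) ≤ ∑ e ∈ X, c e := by
  obtain ⟨S, hS, rfl⟩ := subset_image_iff.mp (himg ▸ hX)
  have hSinj : Set.InjOn p S := hinj.mono (coe_subset.mpr hS)
  rw [card_image_of_injOn hSinj, sum_image hSinj]
  exact sum_Icc_card_le_sum_of_subset hc hS

theorem eq_image_Icc_card_of_forall_lt {β : Type*} [LinearOrder β]
    (hinj : Set.InjOn p (Icc 1 s.card)) (himg : (Icc 1 s.card).image p = s) {d : α → β}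
    (hd : MonotoneOn (fun i => d (p i)) (Set.Icc 1 s.card)) {Y : Finset α} (hY : Y ⊆ s)
    (hlt : ∀ e ∈ Y, ∀ e' ∈ s \ Y, d e < d e') :
    Y = (Icc 1 Y.card).image p := by
  have hYs : Y.card ≤ s.card := card_le_card hY
  refine (eq_of_subset_of_card_le (fun e he => ?_) (card_image_Icc_of_le hinj hYs).ge).symm
  obtain ⟨i, hi, rfl⟩ := mem_image.mp he
  by_contra hpi
  -- every element of `Y` is strictly `d`-cheaper than `p i`, so it is among `p 1, …, p (i-1)`
  have hYlt : Y ⊆ (Icc 1 (i - 1)).image p := fun y hy => by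
    obtain ⟨j, hj, rfl⟩ := mem_image.mp (himg ▸ hY hy)
    have hji := hlt _ hy _ (mem_sdiff.mpr ⟨image_Icc_subset_of_le himg hYs he, hpi⟩)
    have hj' := mem_Icc.mp hj
    have hi' := mem_Icc.mp hi
    have : j < i := lt_of_not_ge fun hij =>
      (hd ⟨hi'.1, by omega⟩ ⟨hj'.1, hj'.2⟩ hij).not_gt hji
    exact mem_image_of_mem p (mem_Icc.mpr ⟨hj'.1, by omega⟩)
  have := (card_le_card hYlt).trans card_image_le
  simp only [Nat.card_Icc, mem_Icc] at this hi
  omega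

theorem followerResp_eq_image_Icc {Ef X Y : Finset α} {b : ℕ} {d : α → ℚ}
    (hinj : Set.InjOn p (Icc 1 Ef.card)) (himg : (Icc 1 Ef.card).image p = Ef)
    (hd : MonotoneOn (fun i => d (p i)) (Set.Icc 1 Ef.card)) (hX : Disjoint X Ef)
    (hY : FollowerResp Ef b d X Y) :
    Y = (Icc 1 (b - X.card)).image p := by
  obtain ⟨hYEf, hcard, hlt⟩ := hY
  rw [sdiff_eq_self_of_disjoint hX.symm] at hYEf hlt
  rw [← hcard]
  exact eq_image_Icc_card_of_forall_lt hinj himg hd hYEf hlt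

theorem isLeast_sum_add_card {M : Type*} [AddCommMonoid M] [LinearOrder M]
    [IsOrderedAddMonoid M] (hinj : Set.InjOn p (Icc 1 s.card))
    (himg : (Icc 1 s.card).image p = s) {c : α → M}
    (hc : MonotoneOn (fun i => c (p i)) (Set.Icc 1 s.card)) (H : ℕ → M) {I : Finset ℕ}
    (hI : I.Nonempty) (hIs : ∀ k ∈ I, k ≤ s.card) :
    IsLeast {v | ∃ X ⊆ s, X.card ∈ I ∧ v = ∑ e ∈ X, c e + H X.card}
      (I.inf' hI fun k => ∑ i ∈ Icc 1 k, c (p i) + H k) := by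
  constructor
  · obtain ⟨k, hk, hmin⟩ := exists_mem_eq_inf' hI fun k => ∑ i ∈ Icc 1 k, c (p i) + H k
    refine ⟨(Icc 1 k).image p, image_Icc_subset_of_le himg (hIs k hk), ?_, ?_⟩
    · rwa [card_image_Icc_of_le hinj (hIs k hk)]
    · rw [hmin, card_image_Icc_of_le hinj (hIs k hk), sum_image_Icc_of_le hinj (hIs k hk)]
  · rintro v ⟨X, hX, hXI, rfl⟩
    exact (inf'_le _ hXI).trans
      (add_le_add_left (sum_Icc_card_le_sum_of_subset_of_monotoneOn hinj himg hc hX) _)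

end Enumeration

/-- Robust Bilevel Selection with a discrete uncertainty set `U`: for every
feasible leader's solution `X` the adversary's worst case is attained by
enumeration of the finitely many scenarios, and, with disjoint item sets,
the min–max value of the robust leader's problem equals the minimum over
`b_l ∈ {max(0, b − |E_f|), …, min(b, |E_l|)}` of
`g_l(b_l) + max_{d ∈ U} h_d(b − b_l)`, where `g_l(k)` is the sum of the `k`
smallest `c`-values in `E_l` and `h_d(m)` is the sum of leader costs of the
`m` smallest items of `E_f` under `d`. -/
theorem robust_disjoint_minmax_decomposition {α : Type*} [DecidableEq α]
    (El Ef : Finset α) (hdisj : Disjoint El Ef)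
    (b : ℕ) (hb : b ≤ El.card + Ef.card)
    (c : α → ℚ)
    (U : Finset (α → ℚ)) (hU : U.Nonempty)
    -- the follower's (unique) greedy responses, as a function
    (R : (α → ℚ) → Finset α → Finset α)
    (hR : ∀ d ∈ U, ∀ X : Finset α, X ⊆ El → X.card ≤ b → b ≤ X.card + Ef.card →
      FollowerResp Ef b d X (R d X))
    -- a sorted enumeration of E_l by leader cost c
    (pl : ℕ → α)
    (hplinj : Set.InjOn pl (Finset.Icc 1 El.card))
    (hplimg : (Finset.Icc 1 El.card).image pl = El)
    (hplsort : ∀ i j : ℕ, 1 ≤ i → i ≤ j → j ≤ El.card → c (pl i) ≤ c (pl j))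
    -- for each scenario, a sorted enumeration of E_f by follower cost d
    (q : (α → ℚ) → ℕ → α)
    (hq : ∀ d ∈ U, Set.InjOn (q d) (Finset.Icc 1 Ef.card) ∧
      (Finset.Icc 1 Ef.card).image (q d) = Ef ∧
      ∀ i j : ℕ, 1 ≤ i → i ≤ j → j ≤ Ef.card → d (q d i) ≤ d (q d j)) :
    (∀ X : Finset α, X ⊆ El → X.card ≤ b → b ≤ X.card + Ef.card →
      ∃ d ∈ U,
        (∑ e ∈ X ∪ R d X, c e =
          U.sup' hU fun d' => ∑ e ∈ X ∪ R d' X, c e) ∧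
        ∀ d' ∈ U, ∑ e ∈ X ∪ R d' X, c e ≤ ∑ e ∈ X ∪ R d X, c e) ∧
    IsLeast
      {v : ℚ | ∃ X : Finset α, X ⊆ El ∧ X.card ≤ b ∧ b ≤ X.card + Ef.card ∧
        v = U.sup' hU fun d => ∑ e ∈ X ∪ R d X, c e}
      ((Finset.Icc (b - Ef.card) (min b El.card)).inf'
        (Finset.nonempty_Icc.mpr (by omega))
        fun k => (∑ i ∈ Finset.Icc 1 k, c (pl i)) +
          U.sup' hU fun d => ∑ i ∈ Finset.Icc 1 (b - k), c (q d i)) := by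
  have hworst : ∀ X ⊆ El, X.card ≤ b → b ≤ X.card + Ef.card →
      (U.sup' hU fun d => ∑ e ∈ X ∪ R d X, c e) =
        ∑ e ∈ X, c e + U.sup' hU fun d => ∑ i ∈ Icc 1 (b - X.card), c (q d i) := by
    intro X hX h₁ h₂
    rw [add_sup']
    refine sup'_congr hU rfl fun d hd => ?_
    obtain ⟨hinj, himg, hsort⟩ := hq d hd
    have hk : b - X.card ≤ Ef.card := by omega
    rw [followerResp_eq_image_Icc hinj himg (fun i hi j hj hij => hsort i j hi.1 hij hj.2)
      (hdisj.mono_left hX) (hR d hd X hX h₁ h₂), sum_union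
      (hdisj.mono hX (image_Icc_subset_of_le himg hk)), sum_image_Icc_of_le hinj hk]
  refine ⟨fun X _ _ _ => ?_, ?_⟩
  · obtain ⟨d, hd, hmax⟩ := exists_mem_eq_sup' hU fun d => ∑ e ∈ X ∪ R d X, c e
    exact ⟨d, hd, hmax.symm, fun d' hd' => hmax ▸ le_sup' (fun d => ∑ e ∈ X ∪ R d X, c e) hd'⟩
  · have hsorted : MonotoneOn (fun i => c (pl i)) (Set.Icc 1 El.card) :=
      fun i hi j hj hij => hplsort i j hi.1 hij hj.2
    convert isLeast_sum_add_card hplinj hplimg hsorted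
      (fun k => U.sup' hU fun d => ∑ i ∈ Icc 1 (b - k), c (q d i))
      (I := Icc (b - Ef.card) (min b El.card)) (nonempty_Icc.mpr (by omega))
      (fun k hk => (mem_Icc.mp hk).2.trans (min_le_right b _)) using 1
    · rfl
    ext v
    constructor
    · rintro ⟨X, hX, h₁, h₂, rfl⟩
      exact ⟨X, hX, mem_Icc.mpr ⟨by omega, le_min h₁ (card_le_card hX)⟩, hworst X hX h₁ h₂⟩
    · rintro ⟨X, hX, hXI, rfl⟩
      rw [mem_Icc, le_min_iff] at hXI
      obtain ⟨h₂, h₁, -⟩ := hXI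
      exact ⟨X, hX, h₁, by omega, (hworst X hX h₁ (by omega)).symm⟩
end
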